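/- arXiv:2311.09340 — 4 statements merged into one kernel-verified Lean document; each statement's English description precedes it below -/
import Mathlib

section
/- Let T be a binary phylogenetic X-tree and let C be a set of characters on X that distinguishes T. Then no two incident internal edges of T are distinguished by the same character in C. -/
open SimpleGraph

/-- A phylogenetic `X`-tree: a finite tree with no degree-two vertices whose
leaves (degree-one vertices) are labelled bijectively by `X`. -/
structure PhyloTree (X : Type) : Type 1 where
  V : Type
  vfin : Finite V
  G : SimpleGraph V
  isTree : G.IsTree
  φ : X → V
  φinj : Function.Injective φ
  leaf_iff : ∀ v : V, (G.neighborSet v).ncard = 1 ↔ v ∈ Set.range φ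
  not_two : ∀ v : V, (G.neighborSet v).ncard ≠ 2

namespace PhyloTree

variable {X : Type}

/-- Internal (non-leaf) vertex. -/
def IsInternal (T : PhyloTree X) (v : T.V) : Prop := v ∉ Set.range T.φ

/-- A binary phylogenetic tree: every internal vertex has degree three. -/
def IsBinary (T : PhyloTree X) : Prop :=
  ∀ v : T.V, T.IsInternal v → (T.G.neighborSet v).ncard = 3

/-- `w` lies on the path between `u` and `v`. -/
def OnPath (T : PhyloTree X) (u v w : T.V) : Prop :=
  ∃ p : T.G.Walk u v, p.IsPath ∧ w ∈ p.support

/-- Vertex set of the minimal subtree spanned by the leaves labelled by `A`. -/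
def span (T : PhyloTree X) (A : Set X) : Set T.V :=
  {v | ∃ a ∈ A, ∃ b ∈ A, T.OnPath (T.φ a) (T.φ b) v}

/-- A character (partition of `X`) is convex on `T` if the spanned subtrees of
distinct parts are vertex disjoint. -/
def ConvexOn (T : PhyloTree X) (χ : Set (Set X)) : Prop :=
  ∀ A ∈ χ, ∀ B ∈ χ, A ≠ B → Disjoint (T.span A) (T.span B)

/-- Isomorphism of phylogenetic `X`-trees fixing the leaf labels. -/
def LabelIso (T T' : PhyloTree X) : Prop :=
  ∃ e : T.G ≃g T'.G, ∀ x : X, e (T.φ x) = T'.φ x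

/-- A set `C` of characters defines `T`: each member is a character convex on `T`,
and any phylogenetic `X`-tree on which `C` is convex is isomorphic to `T`. -/
def Defines (C : Set (Set (Set X))) (T : PhyloTree X) : Prop :=
  (∀ χ ∈ C, Setoid.IsPartition χ) ∧ (∀ χ ∈ C, T.ConvexOn χ) ∧
    ∀ T' : PhyloTree X, (∀ χ ∈ C, T'.ConvexOn χ) → T.LabelIso T'

/-- `T` is defined by some set of at most `n` characters. -/
def DefinedByAtMost (n : ℕ) (T : PhyloTree X) : Prop :=
  ∃ C : Set (Set (Set X)), C.Finite ∧ C.ncard ≤ n ∧ Defines C T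

/-- A cherry: two distinct leaves adjacent to a common vertex. -/
def IsCherry (T : PhyloTree X) (x y : X) : Prop :=
  x ≠ y ∧ ∃ v : T.V, T.G.Adj (T.φ x) v ∧ T.G.Adj (T.φ y) v

/-- An internal edge: an edge both of whose endpoints are internal vertices. -/
def IsInternalEdge (T : PhyloTree X) (u v : T.V) : Prop :=
  T.G.Adj u v ∧ T.IsInternal u ∧ T.IsInternal v

/-- The character `χ` distinguishes the internal edge `{u, v}`. -/
def DistEdge (T : PhyloTree X) (χ : Set (Set X)) (u v : T.V) : Prop :=
  ∃ A ∈ χ, ∃ B ∈ χ, A ≠ B ∧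
    (∃ a ∈ A, ∃ a' ∈ A, a ≠ a' ∧
      T.OnPath (T.φ a) (T.φ a') u ∧ ¬ T.OnPath (T.φ a) (T.φ a') v) ∧
    (∃ b ∈ B, ∃ b' ∈ B, b ≠ b' ∧
      T.OnPath (T.φ b) (T.φ b') v ∧ ¬ T.OnPath (T.φ b) (T.φ b') u)

/-- `C` distinguishes `T`: every internal edge is distinguished by some member of `C`. -/
def Distinguishes (T : PhyloTree X) (C : Set (Set (Set X))) : Prop :=
  ∀ u v : T.V, T.IsInternalEdge u v → ∃ χ ∈ C, T.DistEdge χ u v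

/-- Every internal vertex is adjacent to a leaf. -/
def IsCaterpillar (T : PhyloTree X) : Prop :=
  ∀ v : T.V, T.IsInternal v → ∃ u : T.V, T.G.Adj v u ∧ u ∈ Set.range T.φ

/-- An internal `k`-colouring: a surjective assignment of colours in `Fin k` to the
internal edges of `T` such that adjacent internal edges get different colours. -/
structure InternalColoring (T : PhyloTree X) (k : ℕ) where
  γ : Sym2 T.V → Fin k
  proper : ∀ u v w : T.V, T.IsInternalEdge u v → T.IsInternalEdge v w → u ≠ w →
    γ s(u, v) ≠ γ s(v, w)
  surj : ∀ i : Fin k, ∃ u v : T.V, T.IsInternalEdge u v ∧ γ s(u, v) = i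

/-- The graph obtained from `T` by deleting all internal edges of colour `i`. -/
def delGraph (T : PhyloTree X) {k : ℕ} (c : T.InternalColoring k) (i : Fin k) :
    SimpleGraph T.V :=
  T.G.deleteEdges {e | c.γ e = i ∧ ∃ u v : T.V, e = s(u, v) ∧ T.IsInternalEdge u v}

/-- The character `π(γ, i)` induced by colour `i`: the partition of `X` given by the
connected components after deleting the internal edges of colour `i`. -/
def colorChar (T : PhyloTree X) {k : ℕ} (c : T.InternalColoring k) (i : Fin k) :
    Set (Set X) :=
  {P | ∃ x : X, P = {y : X | (T.delGraph c i).Reachable (T.φ x) (T.φ y)}}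

/-- The set `Π(γ)` of characters induced by an internal colouring. -/
def charSet (T : PhyloTree X) {k : ℕ} (c : T.InternalColoring k) : Set (Set (Set X)) :=
  Set.range (T.colorChar c)

/-- `T` is defined by the internal colouring `c`. -/
def DefinedByColoring (T : PhyloTree X) {k : ℕ} (c : T.InternalColoring k) : Prop :=
  Defines (T.charSet c) T

end PhyloTree

private lemma mid_neighbors {V : Type*} {G : SimpleGraph V} {x y v : V} (p : G.Walk x y)
    (hp : p.IsPath) (hv : v ∈ p.support) (hvx : v ≠ x) (hvy : v ≠ y) :
    ∃ n1 n2 : V, n1 ≠ n2 ∧ G.Adj v n1 ∧ G.Adj v n2 ∧ n1 ∈ p.support ∧ n2 ∈ p.support := by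
  classical
  set q := p.takeUntil v hv with hq
  set r := p.dropUntil v hv with hr
  have hsupp : p.support = q.support ++ r.support.tail := by
    conv_lhs => rw [← p.take_spec hv]
    exact Walk.support_append _ _
  have hq1 : ¬ q.reverse.Nil := Walk.not_nil_of_ne hvx
  obtain ⟨n1, h1, q', hq'⟩ := Walk.not_nil_iff.mp hq1
  have hn1q : n1 ∈ q.support := by
    have : n1 ∈ q.reverse.support := by rw [hq']; simp
    rwa [Walk.support_reverse, List.mem_reverse] at this
  have hr1 : ¬ r.Nil := Walk.not_nil_of_ne hvy
  obtain ⟨n2, h2, r', hr'⟩ := Walk.not_nil_iff.mp hr1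
  have hn2r : n2 ∈ r.support.tail := by rw [hr']; simp
  have hnodup : p.support.Nodup := hp.support_nodup
  rw [hsupp] at hnodup
  have hdisj := (List.nodup_append'.mp hnodup).2.2
  refine ⟨n1, n2, fun h => hdisj hn1q (h ▸ hn2r), h1, h2, ?_, ?_⟩
  · rw [hsupp]; exact List.mem_append_left _ hn1q
  · rw [hsupp]; exact List.mem_append_right _ hn2r

/-- no two incident internal edges of a binary phylogenetic tree are
distinguished by the same character of a distinguishing set of (convex) characters. -/
theorem incident_edges_distinct_characters {X : Type} (T : PhyloTree X)
    (hbin : T.IsBinary) (C : Set (Set (Set X)))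
    (hchar : ∀ χ ∈ C, Setoid.IsPartition χ)
    (hconv : ∀ χ ∈ C, T.ConvexOn χ)
    (hdist : T.Distinguishes C) :
    ∀ u v w : T.V, T.IsInternalEdge u v → T.IsInternalEdge v w → u ≠ w →
      ∀ χ ∈ C, ¬ (T.DistEdge χ u v ∧ T.DistEdge χ v w) := by
  intro u v w huv hvw huw χ hχ ⟨h1, h2⟩
  classical
  obtain ⟨A, hA, B, hB, hAB, ⟨a, ha, a', ha', haa', hOPau, hOPav⟩,
    ⟨b, hb, b', hb', hbb', hOPbv, hOPbu⟩⟩ := h1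
  obtain ⟨A', hA', B', hB', hA'B', ⟨c, hc, c', hc', hcc', hOPcv, hOPcw⟩,
    ⟨d, hd, d', hd', hdd', hOPdw, hOPdv⟩⟩ := h2
  have hconvχ := hconv χ hχ
  have huA : u ∈ T.span A := ⟨a, ha, a', ha', hOPau⟩
  have hvB : v ∈ T.span B := ⟨b, hb, b', hb', hOPbv⟩
  have hvA' : v ∈ T.span A' := ⟨c, hc, c', hc', hOPcv⟩
  have hwB' : w ∈ T.span B' := ⟨d, hd, d', hd', hOPdw⟩
  have hBA' : B = A' := by
    by_contra h
    exact (Set.disjoint_left.mp (hconvχ B hB A' hA' h)) hvB hvA'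
  have huB : u ∉ T.span B :=
    fun h => (Set.disjoint_left.mp (hconvχ A hA B hB hAB)) huA h
  have hwB : w ∉ T.span B := fun h =>
    (Set.disjoint_left.mp (hconvχ B' hB' B hB (fun he => hA'B' (hBA'.symm.trans he.symm))))
      hwB' h
  obtain ⟨p, hp, hvp⟩ := hOPbv
  have hvint : T.IsInternal v := huv.2.2
  have hvb : v ≠ T.φ b := fun h => hvint ⟨b, h.symm⟩
  have hvb' : v ≠ T.φ b' := fun h => hvint ⟨b', h.symm⟩
  obtain ⟨n1, n2, hn12, hadj1, hadj2, hn1p, hn2p⟩ := mid_neighbors p hp hvp hvb hvb'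
  have hn1B : n1 ∈ T.span B := ⟨b, hb, b', hb', p, hp, hn1p⟩
  have hn2B : n2 ∈ T.span B := ⟨b, hb, b', hb', p, hp, hn2p⟩
  have hn1u : n1 ≠ u := fun h => huB (h ▸ hn1B)
  have hn1w : n1 ≠ w := fun h => hwB (h ▸ hn1B)
  have hn2u : n2 ≠ u := fun h => huB (h ▸ hn2B)
  have hn2w : n2 ≠ w := fun h => hwB (h ▸ hn2B)
  have hdeg : (T.G.neighborSet v).ncard = 3 := hbin v hvint
  have hsub : ({u, w, n1, n2} : Set T.V) ⊆ T.G.neighborSet v := by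
    intro x hx
    rcases hx with rfl | rfl | rfl | rfl
    · exact huv.1.symm
    · exact hvw.1
    · exact hadj1
    · exact hadj2
  have hfin : Finite T.V := T.vfin
  have hle : ({u, w, n1, n2} : Set T.V).ncard ≤ 3 := by
    rw [← hdeg]; exact Set.ncard_le_ncard hsub (Set.toFinite _)
  have h4 : ({u, w, n1, n2} : Set T.V).ncard = 4 := by
    rw [Set.ncard_insert_of_notMem (by simp [huw, Ne.symm hn1u, Ne.symm hn2u])
        (Set.toFinite _),
      Set.ncard_insert_of_notMem (by simp [Ne.symm hn1w, Ne.symm hn2w]) (Set.toFinite _),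
      Set.ncard_pair hn12]
  omega
end

section
/- Let C be a set of characters on X defining a binary phylogenetic X-tree T, let χ ∈ C, and let A ∈ χ with |A| = 1. Then there exists B ∈ χ with B ≠ A such that the set C' = (C − {χ}) ∪ {χ'} also defines T, where χ' = (χ − {A, B}) ∪ {A ∪ B}. -/
open SimpleGraph

section GraphAux
variable {V : Type} {G : SimpleGraph V}

lemma aux_first_split {u v : V} (p : G.Walk u v) (S : Set V) (hv : v ∈ S) :
    ∃ (x : V) (q : G.Walk u x) (r : G.Walk x v), p = q.append r ∧ x ∈ S ∧
      ∀ y ∈ q.support, y ∈ S → y = x := by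
  classical
  induction p with
  | nil =>
    exact ⟨_, Walk.nil, Walk.nil, rfl, hv, fun y hy _ => by simpa using hy⟩
  | @cons u w v h p ih =>
    by_cases hu : u ∈ S
    · exact ⟨u, Walk.nil, Walk.cons h p, rfl, hu, by simp⟩
    · obtain ⟨x, q, r, heq, hx, hfirst⟩ := ih hv
      refine ⟨x, Walk.cons h q, r, by rw [Walk.cons_append, heq], hx, ?_⟩
      intro y hy hyS
      rw [Walk.support_cons, List.mem_cons] at hy
      rcases hy with rfl | hy
      · exact absurd hyS hu
      · exact hfirst y hy hyS

lemma aux_append_isPath {u x v : V} {q : G.Walk u x} {r : G.Walk x v}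
    (hq : q.IsPath) (hr : r.IsPath)
    (hint : ∀ y ∈ q.support, y ∈ r.support → y = x) : (q.append r).IsPath := by
  rw [Walk.isPath_def, Walk.support_append, List.nodup_append]
  have hrs : r.support.Nodup := hr.support_nodup
  have hxr : x ∉ r.support.tail ∧ r.support.tail.Nodup := by
    have := hrs
    rw [r.support_eq_cons, List.nodup_cons] at this
    exact this
  refine ⟨hq.support_nodup, hxr.2, ?_⟩
  intro y hyq z hyr hyz
  subst hyz
  have : y = x := hint y hyq (List.mem_of_mem_tail hyr)
  subst this
  exact hxr.1 hyr

lemma aux_loop_path_eq_nil {u : V} {p : G.Walk u u} (hp : p.IsPath) : p = Walk.nil := by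
  cases p with
  | nil => rfl
  | cons h q =>
    exfalso
    have := hp.support_nodup
    rw [Walk.support_cons, List.nodup_cons] at this
    exact this.1 q.end_mem_support

/-- An interior vertex of a path has at least two neighbours. -/
lemma aux_interior_two_nbrs [Finite V] {u w v : V} {p : G.Walk u w} (hp : p.IsPath)
    (hv : v ∈ p.support) (hvu : v ≠ u) (hvw : v ≠ w) :
    2 ≤ (G.neighborSet v).ncard := by
  classical
  set q := p.takeUntil v hv with hq
  set r := p.dropUntil v hv with hr
  have hqp : q.IsPath := hp.takeUntil hv
  have hrp : r.IsPath := hp.dropUntil hv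
  -- q : u → v nontrivial, r : v → w nontrivial
  have hqrev : q.reverse.IsPath := hqp.reverse
  obtain ⟨x, hxadj, hxq⟩ : ∃ x, G.Adj v x ∧ x ∈ q.support := by
    obtain ⟨x, hadj, q', hq'⟩ := Walk.not_nil_iff.mp (Walk.not_nil_of_ne hvu (p := q.reverse))
    refine ⟨x, hadj, ?_⟩
    have hx : x ∈ q.reverse.support := by
      rw [hq', Walk.support_cons]; exact List.mem_cons_of_mem _ q'.start_mem_support
    rwa [Walk.support_reverse, List.mem_reverse] at hx
  obtain ⟨y, hyadj, hyr⟩ : ∃ y, G.Adj v y ∧ y ∈ r.support.tail := by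
    obtain ⟨y, hadj, r', hr'⟩ := Walk.not_nil_iff.mp (Walk.not_nil_of_ne hvw (p := r))
    refine ⟨y, hadj, ?_⟩
    rw [hr', Walk.support_cons]
    exact r'.start_mem_support
  have hxy : x ≠ y := by
    intro h
    subst h
    have hsplit := p.take_spec hv
    have : p.support.Nodup := hp.support_nodup
    rw [← hsplit, Walk.support_append, List.nodup_append] at this
    exact this.2.2 _ hxq _ hyr rfl
  have hsub : ({x, y} : Set V) ⊆ G.neighborSet v := by
    intro z hz
    rcases hz with rfl | rfl
    · exact hxadj
    · exact hyadj
  calc 2 = ({x, y} : Set V).ncard := (Set.ncard_pair hxy).symm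
    _ ≤ (G.neighborSet v).ncard := Set.ncard_le_ncard hsub (Set.toFinite _)

end GraphAux

namespace PhyloTree

variable {X : Type} (T : PhyloTree X)

lemma path_unique {u v : T.V} {p q : T.G.Walk u v} (hp : p.IsPath) (hq : q.IsPath) :
    p = q := by
  obtain ⟨r, _, hr⟩ := T.isTree.existsUnique_path u v
  rw [hr p hp, hr q hq]

lemma exists_path (u v : T.V) : ∃ p : T.G.Walk u v, p.IsPath :=
  (T.isTree.existsUnique_path u v).exists

lemma onPath_symm {u v w : T.V} (h : T.OnPath u v w) : T.OnPath v u w := by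
  obtain ⟨p, hp, hw⟩ := h
  exact ⟨p.reverse, hp.reverse, by rwa [Walk.support_reverse, List.mem_reverse]⟩

lemma onPath_self_left (u v : T.V) : T.OnPath u v u := by
  obtain ⟨p, hp⟩ := T.exists_path u v
  exact ⟨p, hp, p.start_mem_support⟩

lemma onPath_self_right (u v : T.V) : T.OnPath u v v := by
  obtain ⟨p, hp⟩ := T.exists_path u v
  exact ⟨p, hp, p.end_mem_support⟩

lemma onPath_loop {u w : T.V} (h : T.OnPath u u w) : w = u := by
  obtain ⟨p, hp, hw⟩ := h
  rw [aux_loop_path_eq_nil hp] at hw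
  simpa using hw

/-- Betweenness splitting: if `v` is between `w₁` and `w₂`, then for any `u`,
`v` is between `w₁` and `u`, or between `u` and `w₂`. -/
lemma onPath_split {w₁ w₂ v : T.V} (h : T.OnPath w₁ w₂ v) (u : T.V) :
    T.OnPath w₁ u v ∨ T.OnPath u w₂ v := by
  classical
  obtain ⟨p, hp, hv⟩ := h
  obtain ⟨q0, hq0⟩ := T.exists_path v u
  obtain ⟨x, q1, q2, heq, hxS, hfirst⟩ :=
    aux_first_split q0.reverse {y | y ∈ p.support} hv
  have hq1 : q1.IsPath := by
    have : (q1.append q2).IsPath := heq ▸ hq0.reverse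
    exact this.of_append_left
  have hxp : x ∈ p.support := hxS
  have hv' : v ∈ (p.takeUntil x hxp).support ∨ v ∈ (p.dropUntil x hxp).support := by
    have h2 := hv
    conv at h2 => rw [← p.take_spec hxp]
    rwa [Walk.mem_support_append_iff] at h2
  rcases hv' with h1 | h2
  · left
    refine ⟨(p.takeUntil x hxp).append q1.reverse, ?_, ?_⟩
    · refine aux_append_isPath (hp.takeUntil hxp) hq1.reverse ?_
      intro y hyq hyr
      rw [Walk.support_reverse, List.mem_reverse] at hyr
      exact hfirst y hyr (Walk.support_takeUntil_subset p hxp hyq)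
    · rw [Walk.mem_support_append_iff]
      exact Or.inl h1
  · right
    refine ⟨q1.append (p.dropUntil x hxp), ?_, ?_⟩
    · refine aux_append_isPath hq1 (hp.dropUntil hxp) ?_
      intro y hyq hyr
      exact hfirst y hyq (Walk.support_dropUntil_subset p hxp hyr)
    · rw [Walk.mem_support_append_iff]
      exact Or.inr h2

/-- If `w` is between `y₁` and `y₂`, and `v` is between `y₁` and `w`, then `v` is
between `y₁` and `y₂`. -/
lemma onPath_trans {y₁ y₂ w v : T.V} (h1 : T.OnPath y₁ y₂ w) (h2 : T.OnPath y₁ w v) :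
    T.OnPath y₁ y₂ v := by
  classical
  obtain ⟨p, hp, hw⟩ := h1
  obtain ⟨q, hq, hv⟩ := h2
  have : q = p.takeUntil w hw := T.path_unique hq (hp.takeUntil hw)
  refine ⟨p, hp, ?_⟩
  exact Walk.support_takeUntil_subset p hw (this ▸ hv)

lemma mem_span {P : Set X} {a : X} (ha : a ∈ P) : T.φ a ∈ T.span P :=
  ⟨a, ha, a, ha, T.onPath_self_left _ _⟩

lemma span_mono {P Q : Set X} (h : P ⊆ Q) : T.span P ⊆ T.span Q := by
  rintro v ⟨a, ha, b, hb, hab⟩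
  exact ⟨a, h ha, b, h hb, hab⟩

/-- The span of a part is path-closed. -/
lemma span_closed {P : Set X} {w₁ w₂ v : T.V} (h1 : w₁ ∈ T.span P) (h2 : w₂ ∈ T.span P)
    (hv : T.OnPath w₁ w₂ v) : v ∈ T.span P := by
  obtain ⟨x₁, hx₁, x₂, hx₂, hw1⟩ := h1
  obtain ⟨y₁, hy₁, y₂, hy₂, hw2⟩ := h2
  rcases T.onPath_split hv (T.φ x₁) with h | h
  · exact ⟨x₁, hx₁, x₂, hx₂, T.onPath_trans hw1 (T.onPath_symm h)⟩
  · rcases T.onPath_split h (T.φ y₁) with h' | h'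
    · exact ⟨x₁, hx₁, y₁, hy₁, h'⟩
    · exact ⟨y₁, hy₁, y₂, hy₂, T.onPath_trans hw2 h'⟩

lemma span_singleton (a : X) : T.span {a} = {T.φ a} := by
  ext v
  constructor
  · rintro ⟨x, rfl, y, rfl, h⟩
    exact T.onPath_loop h
  · rintro rfl
    exact T.mem_span rfl

/-- A leaf whose label is not in `Q` does not lie in the span of `Q`. -/
lemma leaf_not_mem_span {a : X} {Q : Set X} (ha : a ∉ Q) : T.φ a ∉ T.span Q := by
  rintro ⟨x, hx, y, hy, p, hp, hsupp⟩
  have hfin : Finite T.V := T.vfin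
  have hax : T.φ a ≠ T.φ x := fun h => ha (T.φinj h ▸ hx)
  have hay : T.φ a ≠ T.φ y := fun h => ha (T.φinj h ▸ hy)
  have h2 := aux_interior_two_nbrs hp hsupp hax hay
  have h1 : (T.G.neighborSet (T.φ a)).ncard = 1 := (T.leaf_iff _).mpr ⟨a, rfl⟩
  omega

end PhyloTree

namespace PhyloTree
variable {X : Type}

/-- There is no binary phylogenetic tree all of whose leaf labels coincide. -/
lemma singleton_label_false (T : PhyloTree X) (hbin : T.IsBinary) (a : X)
    (h : ∀ v ∈ Set.range T.φ, v = T.φ a) : False := by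
  classical
  have : Finite T.V := T.vfin
  letI : Fintype T.V := Fintype.ofFinite _
  letI : DecidableRel T.G.Adj := Classical.decRel _
  have hdeg : ∀ v : T.V, (T.G.neighborSet v).ncard = T.G.degree v := fun v => by
    rw [Set.ncard_eq_toFinset_card' (T.G.neighborSet v)]
    simp [SimpleGraph.degree, SimpleGraph.neighborFinset]
  have ha : T.G.degree (T.φ a) = 1 := by
    rw [← hdeg]
    exact (T.leaf_iff _).mpr ⟨a, rfl⟩
  have hother : ∀ v : T.V, v ≠ T.φ a → T.G.degree v = 3 := by
    intro v hv
    rw [← hdeg]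
    exact hbin v (fun hr => hv (h v hr))
  have hsum := T.G.sum_degrees_eq_twice_card_edges
  have hcard : T.G.edgeFinset.card + 1 = Fintype.card T.V := T.isTree.card_edgeFinset
  have hsplit : ∑ v : T.V, T.G.degree v
      = T.G.degree (T.φ a) + ∑ v ∈ Finset.univ.erase (T.φ a), T.G.degree v :=
    (Finset.add_sum_erase _ _ (Finset.mem_univ _)).symm
  have hconst : ∑ v ∈ Finset.univ.erase (T.φ a), T.G.degree v
      = 3 * (Fintype.card T.V - 1) := by
    rw [Finset.sum_congr rfl (fun v hv => hother v (Finset.ne_of_mem_erase hv))]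
    rw [Finset.sum_const, Finset.card_erase_of_mem (Finset.mem_univ _), Finset.card_univ]
    ring
  have hpos : 1 ≤ Fintype.card T.V := Fintype.card_pos_iff.mpr ⟨T.φ a⟩
  rw [hsplit, ha, hconst] at hsum
  omega

end PhyloTree


/-- a singleton part of a character in a defining set can be merged with
another part keeping a defining set. -/
theorem merge_singleton_part {X : Type} (T : PhyloTree X) (hbin : T.IsBinary)
    (C : Set (Set (Set X))) (hdef : PhyloTree.Defines C T)
    (χ : Set (Set X)) (hχ : χ ∈ C) (A : Set X) (hA : A ∈ χ) (hA1 : A.ncard = 1) :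
    ∃ B ∈ χ, B ≠ A ∧
      PhyloTree.Defines ((C \ {χ}) ∪ {(χ \ {A, B}) ∪ {A ∪ B}}) T := by
    classical
  obtain ⟨hpart, hconv, hiso⟩ := hdef
  obtain ⟨a, rfl⟩ : ∃ a, A = {a} := Set.ncard_eq_one.mp hA1
  have hχp : Setoid.IsPartition χ := hpart χ hχ
  have hχc : T.ConvexOn χ := hconv χ hχ
  -- two parts of χ containing a common element are equal
  have hpartmem : ∀ {x : X} {D E : Set X}, D ∈ χ → x ∈ D → E ∈ χ → x ∈ E → D = E := by
    intro x D E hD hxD hE hxE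
    obtain ⟨b, -, hb⟩ := hχp.2 x
    rw [hb D ⟨hD, hxD⟩, hb E ⟨hE, hxE⟩]
  -- each part not containing a avoids a
  have hnotina : ∀ {D : Set X}, D ∈ χ → D ≠ {a} → a ∉ D := by
    intro D hD hDa haD
    exact hDa (hpartmem hD haD hA rfl)
  -- there is a part other than {a}
  have hotherpart : ∃ P ∈ χ, P ≠ ({a} : Set X) := by
    by_contra h
    push_neg at h
    refine T.singleton_label_false hbin a ?_
    rintro v ⟨x, rfl⟩
    obtain ⟨P, ⟨hP, hxP⟩, -⟩ := hχp.2 x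
    have hx : x ∈ ({a} : Set X) := (h P hP) ▸ hxP
    rw [hx]
  -- the union of spans of the other parts
  set S : Set T.V := {v | ∃ P ∈ χ, P ≠ ({a} : Set X) ∧ v ∈ T.span P} with hSdef
  have hSne : S.Nonempty := by
    obtain ⟨P, hP, hPa⟩ := hotherpart
    have hPne : P ≠ ∅ := fun h => hχp.1 (h ▸ hP)
    obtain ⟨p, hp⟩ := Set.nonempty_iff_ne_empty.mpr hPne
    exact ⟨T.φ p, P, hP, hPa, T.mem_span hp⟩
  -- a path from the leaf a to each vertex
  choose pth hpth using fun (w : T.V) => T.exists_path (T.φ a) w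
  haveI := T.vfin
  obtain ⟨w₀, hw₀S, hmin⟩ :=
    Set.exists_min_image S (fun w => (pth w).length) (Set.toFinite S) hSne
  obtain ⟨B, hB, hBa, hw₀B⟩ := hw₀S
  have haB : a ∉ B := hnotina hB hBa
  -- C1 : the path from φ a to w₀ meets S only at w₀
  have C1 : ∀ x (hx : x ∈ (pth w₀).support), x ∈ S → x = w₀ := by
    intro x hx hxS
    have hx1 : ((pth w₀).takeUntil x hx).IsPath := (hpth w₀).takeUntil hx
    have hlen1 : ((pth w₀).takeUntil x hx).length = (pth x).length := by
      rw [T.path_unique hx1 (hpth x)]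
    have hle : ((pth w₀).takeUntil x hx).length ≤ (pth w₀).length :=
      Walk.length_takeUntil_le _ hx
    have hge : (pth w₀).length ≤ (pth x).length := hmin x hxS
    have hspec := congrArg Walk.length ((pth w₀).take_spec hx)
    rw [Walk.length_append] at hspec
    have hzero : ((pth w₀).dropUntil x hx).length = 0 := by omega
    exact Walk.eq_of_length_eq_zero hzero
  have hspanBS : T.span B ⊆ S := fun v hv => ⟨B, hB, hBa, hv⟩
  -- C2 : a point of S on a path from φ a to a leaf of B lies in span B
  have C2 : ∀ b ∈ B, ∀ v, T.OnPath (T.φ a) (T.φ b) v → v ∈ S → v ∈ T.span B := by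
    intro b hb v hv hvS
    obtain ⟨p, hp, hvp⟩ := hv
    obtain ⟨r, hr⟩ := T.exists_path w₀ (T.φ b)
    have hrspan : ∀ y ∈ r.support, y ∈ T.span B := fun y hy =>
      T.span_closed hw₀B (T.mem_span hb) ⟨r, hr, hy⟩
    have happ : ((pth w₀).append r).IsPath :=
      aux_append_isPath (hpth w₀) hr
        (fun y hyq hyr => C1 y hyq (hspanBS (hrspan y hyr)))
    have hpe : p = (pth w₀).append r := T.path_unique hp happ
    rw [hpe, Walk.mem_support_append_iff] at hvp
    rcases hvp with h | h
    · rw [C1 v h hvS]; exact hw₀B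
    · exact hrspan v h
  -- key convexity claim for the merged part
  have Cconv : ∀ D ∈ χ, D ≠ ({a} : Set X) → D ≠ B →
      Disjoint (T.span ({a} ∪ B)) (T.span D) := by
    intro D hD hDa hDB
    rw [Set.disjoint_left]
    intro v hv hvD
    have hvS : v ∈ S := ⟨D, hD, hDa, hvD⟩
    have hBD : Disjoint (T.span B) (T.span D) := hχc B hB D hD (Ne.symm hDB)
    obtain ⟨x, hx, y, hy, hxy⟩ := hv
    have main : ∀ b ∈ B, T.OnPath (T.φ a) (T.φ b) v → False := fun b hb h =>
      Set.disjoint_left.mp hBD (C2 b hb v h hvS) hvD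
    rcases hx with hx | hx <;> rcases hy with hy | hy
    · -- x = a, y = a
      rw [Set.mem_singleton_iff] at hx hy
      rw [hx, hy] at hxy
      have hva : v = T.φ a := T.onPath_loop hxy
      exact T.leaf_not_mem_span (hnotina hD hDa) (hva ▸ hvD)
    · rw [Set.mem_singleton_iff] at hx
      rw [hx] at hxy
      exact main y hy hxy
    · rw [Set.mem_singleton_iff] at hy
      rw [hy] at hxy
      exact main x hx (T.onPath_symm hxy)
    · exact Set.disjoint_left.mp hBD ⟨x, hx, y, hy, hxy⟩ hvD
  -- the merged character
  set χ' : Set (Set X) := (χ \ {({a} : Set X), B}) ∪ {({a} : Set X) ∪ B} with hχ'def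
  have hmem' : ∀ {D : Set X}, D ∈ χ → D ≠ ({a} : Set X) → D ≠ B → D ∈ χ' := by
    intro D hD h1 h2
    exact Or.inl ⟨hD, by simp [h1, h2]⟩
  have hABmem : ({a} : Set X) ∪ B ∈ χ' := Or.inr rfl
  have hABne : ∀ {D : Set X}, D ∈ χ → D ≠ ({a} : Set X) → ({a} : Set X) ∪ B ≠ D := by
    intro D hD h1 he
    exact hnotina hD h1 (he ▸ Or.inl rfl)
  -- χ' is a partition
  have hχ'p : Setoid.IsPartition χ' := by
    constructor
    · rintro (⟨h1, -⟩ | h2)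
      · exact hχp.1 h1
      · rw [Set.mem_singleton_iff] at h2
        have : a ∈ (∅ : Set X) := h2 ▸ Or.inl rfl
        exact this
    · intro x
      obtain ⟨P, ⟨hP, hxP⟩, hPu⟩ := hχp.2 x
      by_cases hPA : P = ({a} : Set X) ∨ P = B
      · refine ⟨({a} : Set X) ∪ B, ⟨hABmem, ?_⟩, ?_⟩
        · rcases hPA with rfl | rfl
          · exact Or.inl hxP
          · exact Or.inr hxP
        · rintro Q ⟨hQ, hxQ⟩
          rcases hQ with ⟨hQχ, hQn⟩ | hQ
          · exfalso
            have hQP : Q = P := hPu Q ⟨hQχ, hxQ⟩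
            subst hQP
            simp only [Set.mem_insert_iff, Set.mem_singleton_iff, not_or] at hQn
            rcases hPA with h | h
            · exact hQn.1 h
            · exact hQn.2 h
          · exact hQ
      · push_neg at hPA
        refine ⟨P, ⟨hmem' hP hPA.1 hPA.2, hxP⟩, ?_⟩
        rintro Q ⟨hQ, hxQ⟩
        rcases hQ with ⟨hQχ, -⟩ | hQ
        · exact hPu Q ⟨hQχ, hxQ⟩
        · exfalso
          rw [Set.mem_singleton_iff] at hQ
          subst hQ
          rcases hxQ with hxa | hxB
          · exact hPA.1 (hPu ({a} : Set X) ⟨hA, hxa⟩ ▸ rfl)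
          · exact hPA.2 (hPu B ⟨hB, hxB⟩ ▸ rfl)
  -- χ' is convex on T
  have hχ'c : T.ConvexOn χ' := by
    intro P hP Q hQ hPQ
    rcases hP with ⟨hPχ, hPn⟩ | hP <;> rcases hQ with ⟨hQχ, hQn⟩ | hQ
    · exact hχc P hPχ Q hQχ hPQ
    · rw [Set.mem_singleton_iff] at hQ; subst hQ
      simp only [Set.mem_insert_iff, Set.mem_singleton_iff, not_or] at hPn
      exact (Cconv P hPχ hPn.1 hPn.2).symm
    · rw [Set.mem_singleton_iff] at hP; subst hP
      simp only [Set.mem_insert_iff, Set.mem_singleton_iff, not_or] at hQn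
      exact Cconv Q hQχ hQn.1 hQn.2
    · rw [Set.mem_singleton_iff] at hP hQ
      exact absurd (hP.trans hQ.symm) hPQ
  refine ⟨B, hB, hBa, ?_, ?_, ?_⟩
  · -- partitions
    rintro ψ (⟨hψC, -⟩ | hψ)
    · exact hpart ψ hψC
    · rw [Set.mem_singleton_iff] at hψ; subst hψ; exact hχ'p
  · -- convexity on T
    rintro ψ (⟨hψC, -⟩ | hψ)
    · exact hconv ψ hψC
    · rw [Set.mem_singleton_iff] at hψ; subst hψ; exact hχ'c
  · -- any tree on which the new set is convex is isomorphic to T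
    intro T' hT'
    have hχ'T' : T'.ConvexOn χ' := hT' χ' (Or.inr rfl)
    apply hiso
    intro ψ hψ
    by_cases hψχ : ψ = χ
    · rw [hψχ]
      -- show ψ = χ is convex on T'
      intro P hP Q hQ hPQ
      have hsing : ∀ {D : Set X}, D ∈ χ → D ≠ ({a} : Set X) →
          Disjoint (T'.span {a}) (T'.span D) := by
        intro D hD hDa
        rw [T'.span_singleton a, Set.disjoint_singleton_left]
        exact T'.leaf_not_mem_span (hnotina hD hDa)
      by_cases hPa : P = ({a} : Set X)
      · subst hPa
        exact hsing hQ (fun h => hPQ h.symm)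
      · by_cases hQa : Q = ({a} : Set X)
        · subst hQa
          exact (hsing hP hPa).symm
        · have key : ∀ {E : Set X}, E ∈ χ → E ≠ ({a} : Set X) → B ≠ E →
              Disjoint (T'.span B) (T'.span E) := by
            intro E hE hEa hBE
            have hEχ' : E ∈ χ' := hmem' hE hEa (fun h => hBE h.symm)
            have hdisj : Disjoint (T'.span (({a} : Set X) ∪ B)) (T'.span E) :=
              hχ'T' _ hABmem E hEχ' (hABne hE hEa)
            exact hdisj.mono_left (T'.span_mono Set.subset_union_right)
          by_cases hPB : P = B
          · rw [hPB]
            exact key hQ hQa (fun h => hPQ (hPB.trans h))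
          · by_cases hQB : Q = B
            · rw [hQB]
              exact (key hP hPa (fun h => hPQ (hQB.trans h).symm)).symm
            · exact hχ'T' P (hmem' hP hPa hPB) Q (hmem' hQ hQa hQB) hPQ
    · exact hT' ψ (Or.inl ⟨hψ, hψχ⟩)
end

section
/- A binary phylogenetic X-tree is defined by an internal 1-colouring if and only if |X| = 4. -/
open SimpleGraph

namespace PhyloTree

variable {X : Type}

private lemma walk_closed {V : Type} {G : SimpleGraph V} {S : Set V}
    (hcl : ∀ s ∈ S, ∀ t, G.Adj s t → t ∈ S) :
    ∀ {a b : V}, G.Walk a b → a ∈ S → b ∈ S := by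
  intro a b p
  induction p with
  | nil => exact id
  | cons h q ih => exact fun ha => ih (hcl _ ha _ h)

lemma leaf_ncard (T : PhyloTree X) (x : X) : (T.G.neighborSet (T.φ x)).ncard = 1 :=
  (T.leaf_iff _).2 ⟨x, rfl⟩

lemma leaf_nbhd (T : PhyloTree X) {x : X} {w : T.V} (h : T.G.Adj (T.φ x) w) :
    T.G.neighborSet (T.φ x) = {w} := by
  obtain ⟨a, ha⟩ := Set.ncard_eq_one.mp (T.leaf_ncard x)
  have hw : w ∈ T.G.neighborSet (T.φ x) := h
  rw [ha] at hw
  obtain rfl := Set.mem_singleton_iff.mp hw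
  exact ha

lemma hub_eq (T : PhyloTree X) {x : X} {w w' : T.V} (h : T.G.Adj (T.φ x) w)
    (h' : T.G.Adj (T.φ x) w') : w = w' := by
  have h1 := T.leaf_nbhd h
  have hw : w' ∈ T.G.neighborSet (T.φ x) := h'
  rw [h1] at hw
  exact (Set.mem_singleton_iff.mp hw).symm

lemma not_internal_leaf (T : PhyloTree X) (x : X) : ¬ T.IsInternal (T.φ x) :=
  fun h => h ⟨x, rfl⟩

lemma internal_or_leaf (T : PhyloTree X) (w : T.V) :
    T.IsInternal w ∨ w ∈ Set.range T.φ := Or.symm (em _)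

lemma exists_three (hX : 3 ≤ Nat.card X) : ∃ a b c : X, a ≠ b ∧ a ≠ c ∧ b ≠ c := by
  have hfin : Finite X := Nat.finite_of_card_ne_zero (by omega)
  let e := Finite.equivFinOfCardEq (rfl : Nat.card X = Nat.card X)
  refine ⟨e.symm ⟨0, by omega⟩, e.symm ⟨1, by omega⟩, e.symm ⟨2, by omega⟩, ?_, ?_, ?_⟩ <;>
    · intro h
      have := e.symm.injective h
      simp [Fin.ext_iff] at this

lemma exists_four (hX : 4 ≤ Nat.card X) :
    ∃ a b c d : X, a ≠ b ∧ a ≠ c ∧ a ≠ d ∧ b ≠ c ∧ b ≠ d ∧ c ≠ d := by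
  have hfin : Finite X := Nat.finite_of_card_ne_zero (by omega)
  let e := Finite.equivFinOfCardEq (rfl : Nat.card X = Nat.card X)
  refine ⟨e.symm ⟨0, by omega⟩, e.symm ⟨1, by omega⟩, e.symm ⟨2, by omega⟩,
    e.symm ⟨3, by omega⟩, ?_, ?_, ?_, ?_, ?_, ?_⟩ <;>
    · intro h
      have := e.symm.injective h
      simp [Fin.ext_iff] at this

private lemma pigeon3 {α : Type} {z1 z2 z3 a b c d : α}
    (hab : a ≠ b) (hac : a ≠ c) (had : a ≠ d) (hbc : b ≠ c) (hbd : b ≠ d) (hcd : c ≠ d)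
    (ha : a ∈ ({z1, z2, z3} : Set α)) (hb : b ∈ ({z1, z2, z3} : Set α))
    (hc : c ∈ ({z1, z2, z3} : Set α)) (hd : d ∈ ({z1, z2, z3} : Set α)) : False := by
  simp only [Set.mem_insert_iff, Set.mem_singleton_iff] at ha hb hc hd
  rcases ha with rfl | rfl | rfl <;> rcases hb with rfl | rfl | rfl <;>
    rcases hc with rfl | rfl | rfl <;> rcases hd with rfl | rfl | rfl <;> simp_all

lemma hub_internal (T : PhyloTree X) (hX : 3 ≤ Nat.card X) {x : X} {w : T.V}
    (h : T.G.Adj (T.φ x) w) : T.IsInternal w := by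
  rcases T.internal_or_leaf w with hi | ⟨y, rfl⟩
  · exact hi
  exfalso
  have hN1 := T.leaf_nbhd h
  have hN2 := T.leaf_nbhd h.symm
  obtain ⟨a, b, c, hab, hac, hbc⟩ := exists_three hX
  have hcl : ∀ s ∈ ({T.φ x, T.φ y} : Set T.V), ∀ t, T.G.Adj s t →
      t ∈ ({T.φ x, T.φ y} : Set T.V) := by
    intro s hs t ht
    simp only [Set.mem_insert_iff, Set.mem_singleton_iff] at hs ⊢
    rcases hs with rfl | rfl
    · have ht' : t ∈ T.G.neighborSet (T.φ x) := ht
      rw [hN1] at ht'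
      exact Or.inr (Set.mem_singleton_iff.mp ht')
    · have ht' : t ∈ T.G.neighborSet (T.φ y) := ht
      rw [hN2] at ht'
      exact Or.inl (Set.mem_singleton_iff.mp ht')
  have hall : ∀ t : T.V, t ∈ ({T.φ x, T.φ y} : Set T.V) := by
    intro t
    obtain ⟨p⟩ := T.isTree.isConnected.preconnected (T.φ x) t
    exact walk_closed hcl p (Set.mem_insert _ _)
  have ha := hall (T.φ a); have hb := hall (T.φ b); have hc := hall (T.φ c)
  simp only [Set.mem_insert_iff, Set.mem_singleton_iff] at ha hb hc
  rcases ha with h1 | h1 <;> rcases hb with h2 | h2 <;> rcases hc with h3 | h3 <;>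
    first
      | exact hab (T.φinj (h1.trans h2.symm))
      | exact hac (T.φinj (h1.trans h3.symm))
      | exact hbc (T.φinj (h2.trans h3.symm))

end PhyloTree
namespace PhyloTree

variable {X : Type}

lemma ncard_nbhd_eq_degree {V : Type} (G : SimpleGraph V) [Fintype V] [DecidableRel G.Adj]
    (v : V) : (G.neighborSet v).ncard = G.degree v := by
  rw [Set.ncard_eq_toFinset_card']
  rfl

lemma no_three_internal (T : PhyloTree X) (hX4 : Nat.card X = 4)
    {w1 w2 w3 : T.V} (h1 : T.IsInternal w1) (h2 : T.IsInternal w2) (h3 : T.IsInternal w3)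
    (d12 : w1 ≠ w2) (d13 : w1 ≠ w3) (d23 : w2 ≠ w3) : False := by
  have hVfin : Finite T.V := T.vfin
  cases nonempty_fintype T.V
  classical
  have hdeg : ∀ w : T.V, T.IsInternal w → 3 ≤ T.G.degree w := by
    intro w hw
    obtain ⟨z, hzw⟩ : ∃ z : T.V, z ≠ w := by
      by_cases h : w = w1
      · exact ⟨w2, by rw [h]; exact d12.symm⟩
      · exact ⟨w1, fun he => h he.symm⟩
    have hne : (T.G.neighborSet w).ncard ≠ 0 := by
      obtain ⟨p⟩ := T.isTree.isConnected.preconnected w z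
      cases p with
      | nil => exact absurd rfl hzw
      | @cons _ y _ h q =>
        intro h0
        have hemp := (Set.ncard_eq_zero (Set.toFinite _)).mp h0
        have hy : y ∈ T.G.neighborSet w := h
        rw [hemp] at hy
        exact hy
    have hne1 : (T.G.neighborSet w).ncard ≠ 1 := fun h => hw ((T.leaf_iff w).mp h)
    have hne2 : (T.G.neighborSet w).ncard ≠ 2 := T.not_two w
    rw [← ncard_nbhd_eq_degree]
    omega
  have hedge : T.G.edgeFinset.card + 1 = Fintype.card T.V := T.isTree.card_edgeFinset
  have hsum : ∑ v, T.G.degree v = 2 * T.G.edgeFinset.card :=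
    T.G.sum_degrees_eq_twice_card_edges
  set Lf : Finset T.V := Set.toFinset (Set.range T.φ) with hLfdef
  have hLfcard : Lf.card = 4 := by
    rw [← Set.ncard_eq_toFinset_card', ← Nat.card_coe_set_eq,
      Nat.card_range_of_injective T.φinj, hX4]
  have hsplit : (∑ v ∈ Lf, T.G.degree v) + ∑ v ∈ Lfᶜ, T.G.degree v = ∑ v, T.G.degree v :=
    Finset.sum_add_sum_compl Lf _
  have hsumL : ∑ v ∈ Lf, T.G.degree v = Lf.card := by
    rw [Finset.sum_congr rfl (fun v hv => ?_), Finset.sum_const, smul_eq_mul, mul_one]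
    have hv' : v ∈ Set.range T.φ := by rwa [hLfdef, Set.mem_toFinset] at hv
    obtain ⟨x, rfl⟩ := hv'
    rw [← ncard_nbhd_eq_degree]
    exact T.leaf_ncard x
  have hsumI : Lfᶜ.card * 3 ≤ ∑ v ∈ Lfᶜ, T.G.degree v := by
    have := Finset.card_nsmul_le_sum Lfᶜ (fun v => T.G.degree v) 3 (fun w hw => by
      apply hdeg
      intro hmem
      rw [Finset.mem_compl, hLfdef, Set.mem_toFinset] at hw
      exact hw hmem)
    simpa using this
  have hsub : ({w1, w2, w3} : Finset T.V) ⊆ Lfᶜ := by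
    intro w hw
    rw [Finset.mem_compl, hLfdef, Set.mem_toFinset]
    simp only [Finset.mem_insert, Finset.mem_singleton] at hw
    rcases hw with rfl | rfl | rfl <;> assumption
  have hc3 : 3 ≤ Lfᶜ.card := by
    have := Finset.card_le_card hsub
    rwa [Finset.card_insert_of_notMem (by simp [d12, d13]),
      Finset.card_insert_of_notMem (by simp [d23]), Finset.card_singleton] at this
  have htot : Lf.card + Lfᶜ.card = Fintype.card T.V := Finset.card_add_card_compl Lf
  omega

lemma internal_adj (T : PhyloTree X) {u v : T.V} (hne : u ≠ v)
    (hv : T.IsInternal v)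
    (hI : ∀ w, T.IsInternal w → w = u ∨ w = v) : T.G.Adj u v := by
  obtain ⟨p, hp⟩ := (T.isTree.existsUnique_path u v).exists
  cases p with
  | nil => exact absurd rfl hne
  | @cons _ w0 _ h q =>
    rcases T.internal_or_leaf w0 with hi | ⟨x, hx⟩
    · rcases hI w0 hi with rfl | rfl
      · exact absurd rfl h.ne
      · exact h
    · subst hx
      exfalso
      cases q with
      | nil => exact T.not_internal_leaf x hv
      | @cons _ w1 _ h' q' =>
        have hw1 : u = w1 := T.hub_eq h.symm h'
        subst hw1
        have hnd := hp.support_nodup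
        rw [SimpleGraph.Walk.support_cons, SimpleGraph.Walk.support_cons] at hnd
        have hu' : u ∈ q'.support := q'.start_mem_support
        simp only [List.nodup_cons] at hnd
        exact hnd.1 (by simp [hu'])

end PhyloTree
namespace PhyloTree

variable {X : Type}

/-- Quartet structure data for a phylogenetic tree. -/
structure IsQuartet (T : PhyloTree X) (x1 x2 x3 x4 : X) (u v : T.V) : Prop where
  hu : T.IsInternal u
  hv : T.IsInternal v
  huv : T.G.Adj u v
  hI : ∀ w, T.IsInternal w → w = u ∨ w = v
  h1 : T.G.Adj (T.φ x1) u
  h2 : T.G.Adj (T.φ x2) u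
  h3 : T.G.Adj (T.φ x3) v
  h4 : T.G.Adj (T.φ x4) v

/-- Exhaustion of the label set. -/
def Exh (x1 x2 x3 x4 : X) : Prop := ∀ x : X, x = x1 ∨ x = x2 ∨ x = x3 ∨ x = x4

namespace IsQuartet

variable {T : PhyloTree X} {x1 x2 x3 x4 : X} {u v : T.V}
variable (q : IsQuartet T x1 x2 x3 x4 u v)

include q

lemma leaf_ne_u (x : X) : T.φ x ≠ u := fun h => q.hu ⟨x, h⟩
lemma leaf_ne_v (x : X) : T.φ x ≠ v := fun h => q.hv ⟨x, h⟩

lemma nu_subset (hall : Exh x1 x2 x3 x4) :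
    T.G.neighborSet u ⊆ {v, T.φ x1, T.φ x2} := by
  intro z hz
  have hadj : T.G.Adj u z := hz
  simp only [Set.mem_insert_iff, Set.mem_singleton_iff]
  rcases T.internal_or_leaf z with hi | ⟨x, rfl⟩
  · rcases q.hI z hi with rfl | rfl
    · exact absurd rfl hadj.ne
    · exact Or.inl rfl
  · rcases hall x with rfl | rfl | rfl | rfl
    · exact Or.inr (Or.inl rfl)
    · exact Or.inr (Or.inr rfl)
    · exact absurd (T.hub_eq q.h3 hadj.symm) q.huv.ne.symm
    · exact absurd (T.hub_eq q.h4 hadj.symm) q.huv.ne.symm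

lemma nv_subset (hall : Exh x1 x2 x3 x4) :
    T.G.neighborSet v ⊆ {u, T.φ x3, T.φ x4} := by
  intro z hz
  have hadj : T.G.Adj v z := hz
  simp only [Set.mem_insert_iff, Set.mem_singleton_iff]
  rcases T.internal_or_leaf z with hi | ⟨x, rfl⟩
  · rcases q.hI z hi with rfl | rfl
    · exact Or.inl rfl
    · exact absurd rfl hadj.ne
  · rcases hall x with rfl | rfl | rfl | rfl
    · exact absurd (T.hub_eq q.h1 hadj.symm) q.huv.ne
    · exact absurd (T.hub_eq q.h2 hadj.symm) q.huv.ne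
    · exact Or.inr (Or.inl rfl)
    · exact Or.inr (Or.inr rfl)

lemma vall (hall : Exh x1 x2 x3 x4) (w : T.V) :
    w ∈ ({u, v, T.φ x1, T.φ x2, T.φ x3, T.φ x4} : Set T.V) := by
  have hcl : ∀ s ∈ ({u, v, T.φ x1, T.φ x2, T.φ x3, T.φ x4} : Set T.V), ∀ t, T.G.Adj s t →
      t ∈ ({u, v, T.φ x1, T.φ x2, T.φ x3, T.φ x4} : Set T.V) := by
    intro s hs t ht
    simp only [Set.mem_insert_iff, Set.mem_singleton_iff] at hs ⊢
    rcases hs with rfl | rfl | rfl | rfl | rfl | rfl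
    · have := q.nu_subset hall ht
      simp only [Set.mem_insert_iff, Set.mem_singleton_iff] at this
      tauto
    · have := q.nv_subset hall ht
      simp only [Set.mem_insert_iff, Set.mem_singleton_iff] at this
      tauto
    · exact Or.inl (T.hub_eq ht q.h1)
    · exact Or.inl (T.hub_eq ht q.h2)
    · exact Or.inr (Or.inl (T.hub_eq ht q.h3))
    · exact Or.inr (Or.inl (T.hub_eq ht q.h4))
  obtain ⟨p⟩ := T.isTree.isConnected.preconnected u w
  exact walk_closed hcl p (Set.mem_insert _ _)

lemma adj_cases (hall : Exh x1 x2 x3 x4) {w z : T.V} (h : T.G.Adj w z) :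
    (w = u ∧ z = v) ∨ (w = v ∧ z = u) ∨
    (w = T.φ x1 ∧ z = u) ∨ (w = u ∧ z = T.φ x1) ∨
    (w = T.φ x2 ∧ z = u) ∨ (w = u ∧ z = T.φ x2) ∨
    (w = T.φ x3 ∧ z = v) ∨ (w = v ∧ z = T.φ x3) ∨
    (w = T.φ x4 ∧ z = v) ∨ (w = v ∧ z = T.φ x4) := by
  rcases T.internal_or_leaf w with hi | ⟨x, rfl⟩
  · rcases q.hI w hi with rfl | rfl
    · have hmem := q.nu_subset hall h
      simp only [Set.mem_insert_iff, Set.mem_singleton_iff] at hmem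
      rcases hmem with rfl | rfl | rfl
      · exact Or.inl ⟨rfl, rfl⟩
      · exact Or.inr (Or.inr (Or.inr (Or.inl ⟨rfl, rfl⟩)))
      · exact Or.inr (Or.inr (Or.inr (Or.inr (Or.inr (Or.inl ⟨rfl, rfl⟩)))))
    · have hmem := q.nv_subset hall h
      simp only [Set.mem_insert_iff, Set.mem_singleton_iff] at hmem
      rcases hmem with rfl | rfl | rfl
      · exact Or.inr (Or.inl ⟨rfl, rfl⟩)
      · exact Or.inr (Or.inr (Or.inr (Or.inr (Or.inr (Or.inr (Or.inr (Or.inl ⟨rfl, rfl⟩)))))))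
      · exact Or.inr (Or.inr (Or.inr (Or.inr (Or.inr (Or.inr (Or.inr (Or.inr (Or.inr
          ⟨rfl, rfl⟩))))))))
  · rcases hall x with rfl | rfl | rfl | rfl
    · exact Or.inr (Or.inr (Or.inl ⟨rfl, T.hub_eq h q.h1⟩))
    · exact Or.inr (Or.inr (Or.inr (Or.inr (Or.inl ⟨rfl, T.hub_eq h q.h2⟩))))
    · exact Or.inr (Or.inr (Or.inr (Or.inr (Or.inr (Or.inr (Or.inl ⟨rfl, T.hub_eq h q.h3⟩))))))
    · exact Or.inr (Or.inr (Or.inr (Or.inr (Or.inr (Or.inr (Or.inr (Or.inr (Or.inl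
        ⟨rfl, T.hub_eq h q.h4⟩))))))))

end IsQuartet

end PhyloTree
namespace PhyloTree

variable {X : Type}

lemma labelIso_of_quartets {T T' : PhyloTree X} {x1 x2 x3 x4 : X}
    {u v : T.V} {u' v' : T'.V}
    (hall : Exh x1 x2 x3 x4)
    (q : IsQuartet T x1 x2 x3 x4 u v) (q' : IsQuartet T' x1 x2 x3 x4 u' v') :
    T.LabelIso T' := by
  classical
  have hXne : Nonempty X := ⟨x1⟩
  set f : T.V → T'.V := fun w =>
    if w = u then u' else if w = v then v' else T'.φ (Function.invFun T.φ w) with hf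
  set g : T'.V → T.V := fun w =>
    if w = u' then u else if w = v' then v else T.φ (Function.invFun T'.φ w) with hg
  have hfu : f u = u' := by simp [hf]
  have hfv : f v = v' := by simp [hf, q.huv.ne.symm]
  have hfl : ∀ x : X, f (T.φ x) = T'.φ x := by
    intro x
    simp [hf, q.leaf_ne_u x, q.leaf_ne_v x, Function.leftInverse_invFun T.φinj x]
  have hgu : g u' = u := by simp [hg]
  have hgv : g v' = v := by simp [hg, q'.huv.ne.symm]
  have hgl : ∀ x : X, g (T'.φ x) = T.φ x := by
    intro x
    simp [hg, q'.leaf_ne_u x, q'.leaf_ne_v x, Function.leftInverse_invFun T'.φinj x]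
  have hleft : Function.LeftInverse g f := by
    intro w
    have hw := q.vall hall w
    simp only [Set.mem_insert_iff, Set.mem_singleton_iff] at hw
    rcases hw with rfl | rfl | rfl | rfl | rfl | rfl
    · rw [hfu, hgu]
    · rw [hfv, hgv]
    all_goals rw [hfl, hgl]
  have hright : Function.RightInverse g f := by
    intro w
    have hw := q'.vall hall w
    simp only [Set.mem_insert_iff, Set.mem_singleton_iff] at hw
    rcases hw with rfl | rfl | rfl | rfl | rfl | rfl
    · rw [hgu, hfu]
    · rw [hgv, hfv]
    all_goals rw [hgl, hfl]
  set e : T.V ≃ T'.V := ⟨f, g, hleft, hright⟩ with he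
  have hinj : Function.Injective f := e.injective
  have hmap : ∀ {w z : T.V}, T'.G.Adj (f w) (f z) ↔ T.G.Adj w z := by
    intro w z
    constructor
    · intro h
      rcases q'.adj_cases hall h with ⟨ha, hb⟩ | ⟨ha, hb⟩ | ⟨ha, hb⟩ | ⟨ha, hb⟩ | ⟨ha, hb⟩ |
        ⟨ha, hb⟩ | ⟨ha, hb⟩ | ⟨ha, hb⟩ | ⟨ha, hb⟩ | ⟨ha, hb⟩
      · rw [hinj (ha.trans hfu.symm), hinj (hb.trans hfv.symm)]; exact q.huv
      · rw [hinj (ha.trans hfv.symm), hinj (hb.trans hfu.symm)]; exact q.huv.symm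
      · rw [hinj (ha.trans (hfl x1).symm), hinj (hb.trans hfu.symm)]; exact q.h1
      · rw [hinj (ha.trans hfu.symm), hinj (hb.trans (hfl x1).symm)]; exact q.h1.symm
      · rw [hinj (ha.trans (hfl x2).symm), hinj (hb.trans hfu.symm)]; exact q.h2
      · rw [hinj (ha.trans hfu.symm), hinj (hb.trans (hfl x2).symm)]; exact q.h2.symm
      · rw [hinj (ha.trans (hfl x3).symm), hinj (hb.trans hfv.symm)]; exact q.h3
      · rw [hinj (ha.trans hfv.symm), hinj (hb.trans (hfl x3).symm)]; exact q.h3.symm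
      · rw [hinj (ha.trans (hfl x4).symm), hinj (hb.trans hfv.symm)]; exact q.h4
      · rw [hinj (ha.trans hfv.symm), hinj (hb.trans (hfl x4).symm)]; exact q.h4.symm
    · intro h
      rcases q.adj_cases hall h with ⟨ha, hb⟩ | ⟨ha, hb⟩ | ⟨ha, hb⟩ | ⟨ha, hb⟩ | ⟨ha, hb⟩ |
        ⟨ha, hb⟩ | ⟨ha, hb⟩ | ⟨ha, hb⟩ | ⟨ha, hb⟩ | ⟨ha, hb⟩ <;> subst ha <;> subst hb
      · rw [hfu, hfv]; exact q'.huv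
      · rw [hfu, hfv]; exact q'.huv.symm
      · rw [hfu, hfl]; exact q'.h1
      · rw [hfu, hfl]; exact q'.h1.symm
      · rw [hfu, hfl]; exact q'.h2
      · rw [hfu, hfl]; exact q'.h2.symm
      · rw [hfv, hfl]; exact q'.h3
      · rw [hfv, hfl]; exact q'.h3.symm
      · rw [hfv, hfl]; exact q'.h4
      · rw [hfv, hfl]; exact q'.h4.symm
  exact ⟨⟨e, hmap⟩, fun x => hfl x⟩

end PhyloTree
namespace PhyloTree

variable {X : Type}

lemma exists_hub (T : PhyloTree X) (x : X) : ∃ w, T.G.Adj (T.φ x) w := by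
  obtain ⟨w, hw⟩ := Set.ncard_eq_one.mp (T.leaf_ncard x)
  exact ⟨w, by
    have : w ∈ T.G.neighborSet (T.φ x) := by rw [hw]; exact rfl
    exact this⟩

lemma onPath_hub (T : PhyloTree X) {x y : X} (hxy : T.φ x ≠ T.φ y) {w : T.V}
    (hw : T.G.Adj (T.φ x) w) : T.OnPath (T.φ x) (T.φ y) w := by
  obtain ⟨p, hp⟩ := (T.isTree.existsUnique_path (T.φ x) (T.φ y)).exists
  obtain ⟨w0, h, q, rfl⟩ := SimpleGraph.Walk.exists_eq_cons_of_ne hxy p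
  obtain rfl : w = w0 := T.hub_eq hw h
  exact ⟨SimpleGraph.Walk.cons h q, hp, by
    rw [SimpleGraph.Walk.support_cons]
    exact List.mem_cons_of_mem _ q.start_mem_support⟩

namespace IsQuartet

variable {T : PhyloTree X} {x1 x2 x3 x4 : X} {u v : T.V}
variable (q : IsQuartet T x1 x2 x3 x4 u v)

include q

lemma span_pair_subset (h12 : x1 ≠ x2) :
    T.span {x1, x2} ⊆ {T.φ x1, u, T.φ x2} := by
  have huniq : ∀ {s t : T.V} (p p' : T.G.Walk s t), p.IsPath → p'.IsPath → p = p' :=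
    fun p p' hp hp' => ((T.isTree.existsUnique_path _ _).unique hp hp')
  have hphi : T.φ x1 ≠ T.φ x2 := fun h => h12 (T.φinj h)
  have hp0 : (SimpleGraph.Walk.cons q.h1
      (SimpleGraph.Walk.cons q.h2.symm SimpleGraph.Walk.nil)).IsPath := by
    rw [SimpleGraph.Walk.isPath_def]
    simp [q.leaf_ne_u x1, hphi, (q.leaf_ne_u x2).symm]
  have hp0' : (SimpleGraph.Walk.cons q.h2
      (SimpleGraph.Walk.cons q.h1.symm SimpleGraph.Walk.nil)).IsPath := by
    rw [SimpleGraph.Walk.isPath_def]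
    simp [q.leaf_ne_u x2, hphi.symm, (q.leaf_ne_u x1).symm]
  rintro w ⟨a, ha, b, hb, p, hp, hmem⟩
  simp only [Set.mem_insert_iff, Set.mem_singleton_iff] at ha hb ⊢
  rcases ha with rfl | rfl <;> rcases hb with rfl | rfl
  · obtain rfl := SimpleGraph.Walk.isPath_iff_eq_nil.mp hp
    simp only [SimpleGraph.Walk.support_nil, List.mem_singleton] at hmem
    exact Or.inl hmem
  · obtain rfl := huniq p _ hp hp0
    simp only [SimpleGraph.Walk.support_cons, SimpleGraph.Walk.support_nil,
      List.mem_cons, List.mem_singleton, List.not_mem_nil, or_false] at hmem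
    tauto
  · obtain rfl := huniq p _ hp hp0'
    simp only [SimpleGraph.Walk.support_cons, SimpleGraph.Walk.support_nil,
      List.mem_cons, List.mem_singleton, List.not_mem_nil, or_false] at hmem
    tauto
  · obtain rfl := SimpleGraph.Walk.isPath_iff_eq_nil.mp hp
    simp only [SimpleGraph.Walk.support_nil, List.mem_singleton] at hmem
    exact Or.inr (Or.inr hmem)

lemma span_pair_subset' (h34 : x3 ≠ x4) :
    T.span {x3, x4} ⊆ {T.φ x3, v, T.φ x4} := by
  have q' : IsQuartet T x3 x4 x1 x2 v u :=
    ⟨q.hv, q.hu, q.huv.symm, fun w hw => (q.hI w hw).symm, q.h3, q.h4, q.h1, q.h2⟩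
  exact q'.span_pair_subset h34

end IsQuartet

lemma exists_quartet_binary (T : PhyloTree X) (hbin : T.IsBinary) (hX4 : Nat.card X = 4) :
    ∃ x1 x2 x3 x4 : X, x1 ≠ x2 ∧ x1 ≠ x3 ∧ x1 ≠ x4 ∧ x2 ≠ x3 ∧ x2 ≠ x4 ∧ x3 ≠ x4 ∧
      Exh x1 x2 x3 x4 ∧ ∃ u v : T.V, IsQuartet T x1 x2 x3 x4 u v := by
  have hX3 : 3 ≤ Nat.card X := by omega
  have hXfin : Finite X := Nat.finite_of_card_ne_zero (by omega)
  obtain ⟨a0, b0, c0, d0, hab0, hac0, had0, hbc0, hbd0, hcd0⟩ :=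
    exists_four (X := X) (by omega)
  obtain ⟨u0, hadj0⟩ := T.exists_hub a0
  have hu0 : T.IsInternal u0 := T.hub_internal hX3 hadj0
  -- there is a leaf not adjacent to u0
  have hsecond : ∃ x' : X, ¬ T.G.Adj (T.φ x') u0 := by
    by_contra hone
    push_neg at hone
    obtain ⟨z1, z2, z3, h12, h13, h23, hN⟩ := Set.ncard_eq_three.mp (hbin u0 hu0)
    have hmem : ∀ x : X, T.φ x ∈ ({z1, z2, z3} : Set T.V) := by
      intro x
      have : T.φ x ∈ T.G.neighborSet u0 := (hone x).symm
      rwa [hN] at this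
    exact pigeon3 (fun h => hab0 (T.φinj h)) (fun h => hac0 (T.φinj h))
      (fun h => had0 (T.φinj h)) (fun h => hbc0 (T.φinj h)) (fun h => hbd0 (T.φinj h))
      (fun h => hcd0 (T.φinj h)) (hmem a0) (hmem b0) (hmem c0) (hmem d0)
  obtain ⟨x', hx'⟩ := hsecond
  obtain ⟨v0, hadjv0⟩ := T.exists_hub x'
  have hv0 : T.IsInternal v0 := T.hub_internal hX3 hadjv0
  have hne : u0 ≠ v0 := fun h => hx' (h ▸ hadjv0)
  have hI : ∀ w, T.IsInternal w → w = u0 ∨ w = v0 := by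
    intro w hw
    by_contra hc
    push_neg at hc
    exact T.no_three_internal hX4 hw hu0 hv0 hc.1 hc.2 hne
  have huv : T.G.Adj u0 v0 := T.internal_adj hne hv0 hI
  set Au : Set X := {x | T.G.Adj (T.φ x) u0} with hAu
  set Av : Set X := {x | T.G.Adj (T.φ x) v0} with hAv
  have hcover : ∀ x : X, x ∈ Au ∪ Av := by
    intro x
    obtain ⟨w, hw⟩ := T.exists_hub x
    rcases hI w (T.hub_internal hX3 hw) with rfl | rfl
    · exact Or.inl hw
    · exact Or.inr hw
  have hdisj : Disjoint Au Av := by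
    rw [Set.disjoint_left]
    intro x hxu hxv
    exact hne (T.hub_eq hxu hxv)
  have hle : ∀ (w : T.V) (z : T.V), T.IsInternal w → T.IsInternal z → T.G.Adj w z →
      ({x | T.G.Adj (T.φ x) w} : Set X).ncard ≤ 2 := by
    intro w z hw hz hwz
    by_contra hc
    push_neg at hc
    obtain ⟨a, b, c, ha, hb, hcm, hab, hac, hbc⟩ :=
      (Set.two_lt_ncard_iff (Set.toFinite _)).mp hc
    obtain ⟨z1, z2, z3, h12, h13, h23, hN⟩ := Set.ncard_eq_three.mp (hbin w hw)
    have hmem : ∀ t : T.V, T.G.Adj w t → t ∈ ({z1, z2, z3} : Set T.V) := by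
      intro t ht
      have : t ∈ T.G.neighborSet w := ht
      rwa [hN] at this
    exact pigeon3 (a := z) (b := T.φ a) (c := T.φ b) (d := T.φ c)
      (fun h => hz ⟨a, h.symm⟩) (fun h => hz ⟨b, h.symm⟩) (fun h => hz ⟨c, h.symm⟩)
      (fun h => hab (T.φinj h)) (fun h => hac (T.φinj h)) (fun h => hbc (T.φinj h))
      (hmem z hwz) (hmem _ ha.symm) (hmem _ hb.symm) (hmem _ hcm.symm)
  have hAu2 : Au.ncard ≤ 2 := hle u0 v0 hu0 hv0 huv
  have hAv2 : Av.ncard ≤ 2 := hle v0 u0 hv0 hu0 huv.symm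
  have hunion : Au ∪ Av = Set.univ := Set.eq_univ_of_forall hcover
  have hsum : Au.ncard + Av.ncard = 4 := by
    rw [← Set.ncard_union_eq hdisj (Set.toFinite _) (Set.toFinite _), hunion,
      Set.ncard_univ, hX4]
  obtain ⟨x1, x2, h12, hAueq⟩ := Set.ncard_eq_two.mp (by omega : Au.ncard = 2)
  obtain ⟨x3, x4, h34, hAveq⟩ := Set.ncard_eq_two.mp (by omega : Av.ncard = 2)
  have hmemu : ∀ x, x ∈ Au → T.G.Adj (T.φ x) u0 := fun x hx => hx
  have hmemv : ∀ x, x ∈ Av → T.G.Adj (T.φ x) v0 := fun x hx => hx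
  have hcross : ∀ x, x ∈ Au → ∀ y, y ∈ Av → x ≠ y := by
    intro x hx y hy heq
    cases heq
    exact Set.disjoint_left.mp hdisj hx hy
  have m1 : x1 ∈ Au := by rw [hAueq]; exact Or.inl rfl
  have m2 : x2 ∈ Au := by rw [hAueq]; exact Or.inr rfl
  have m3 : x3 ∈ Av := by rw [hAveq]; exact Or.inl rfl
  have m4 : x4 ∈ Av := by rw [hAveq]; exact Or.inr rfl
  refine ⟨x1, x2, x3, x4, h12, hcross _ m1 _ m3, hcross _ m1 _ m4,
    hcross _ m2 _ m3, hcross _ m2 _ m4, h34, ?_, u0, v0,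
    ⟨hu0, hv0, huv, hI, hmemu _ m1, hmemu _ m2, hmemv _ m3, hmemv _ m4⟩⟩
  intro x
  rcases hcover x with hx | hx
  · rw [hAueq] at hx
    rcases hx with rfl | rfl
    · exact Or.inl rfl
    · exact Or.inr (Or.inl rfl)
  · rw [hAveq] at hx
    rcases hx with rfl | rfl
    · exact Or.inr (Or.inr (Or.inl rfl))
    · exact Or.inr (Or.inr (Or.inr rfl))

lemma exists_quartet_convex (T' : PhyloTree X) (hX4 : Nat.card X = 4)
    {x1 x2 x3 x4 : X} (h12 : x1 ≠ x2) (h13 : x1 ≠ x3) (h14 : x1 ≠ x4)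
    (h23 : x2 ≠ x3) (h24 : x2 ≠ x4) (h34 : x3 ≠ x4)
    (hdis : Disjoint (T'.span {x1, x2}) (T'.span {x3, x4})) :
    ∃ u' v' : T'.V, IsQuartet T' x1 x2 x3 x4 u' v' := by
  have hX3 : 3 ≤ Nat.card X := by omega
  obtain ⟨w1, hw1⟩ := T'.exists_hub x1
  obtain ⟨w2, hw2⟩ := T'.exists_hub x2
  obtain ⟨w3, hw3⟩ := T'.exists_hub x3
  obtain ⟨w4, hw4⟩ := T'.exists_hub x4
  have hi1 : T'.IsInternal w1 := T'.hub_internal hX3 hw1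
  have hi2 : T'.IsInternal w2 := T'.hub_internal hX3 hw2
  have hi3 : T'.IsInternal w3 := T'.hub_internal hX3 hw3
  have hi4 : T'.IsInternal w4 := T'.hub_internal hX3 hw4
  have mA1 : w1 ∈ T'.span {x1, x2} :=
    ⟨x1, Or.inl rfl, x2, Or.inr rfl, T'.onPath_hub (fun h => h12 (T'.φinj h)) hw1⟩
  have mA2 : w2 ∈ T'.span {x1, x2} :=
    ⟨x2, Or.inr rfl, x1, Or.inl rfl, T'.onPath_hub (fun h => h12 (T'.φinj h.symm)) hw2⟩
  have mB3 : w3 ∈ T'.span {x3, x4} :=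
    ⟨x3, Or.inl rfl, x4, Or.inr rfl, T'.onPath_hub (fun h => h34 (T'.φinj h)) hw3⟩
  have mB4 : w4 ∈ T'.span {x3, x4} :=
    ⟨x4, Or.inr rfl, x3, Or.inl rfl, T'.onPath_hub (fun h => h34 (T'.φinj h.symm)) hw4⟩
  have hne : w1 ≠ w3 := by
    rintro rfl
    exact Set.disjoint_left.mp hdis mA1 mB3
  have hI : ∀ w, T'.IsInternal w → w = w1 ∨ w = w3 := by
    intro w hw
    by_contra hc
    push_neg at hc
    exact T'.no_three_internal hX4 hw hi1 hi3 hc.1 hc.2 hne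
  have he2 : w2 = w1 := by
    rcases hI w2 hi2 with h | h
    · exact h
    · exact (Set.disjoint_left.mp hdis mA2 (by rw [h]; exact mB3)).elim
  have he4 : w4 = w3 := by
    rcases hI w4 hi4 with h | h
    · exact (Set.disjoint_left.mp hdis (by rw [← h] at mA1; exact mA1) mB4).elim
    · exact h
  exact ⟨w1, w3, hi1, hi3, T'.internal_adj hne hi3 hI, hI, hw1, he2 ▸ hw2, hw3, he4 ▸ hw4⟩

end PhyloTree
namespace PhyloTree

variable {X : Type}

lemma partition_colorChar (T : PhyloTree X) {k : ℕ} (c : T.InternalColoring k) (i : Fin k) :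
    Setoid.IsPartition (T.colorChar c i) := by
  let r : Setoid X := ⟨fun x y => (T.delGraph c i).Reachable (T.φ x) (T.φ y),
    ⟨fun _ => SimpleGraph.Reachable.refl _, fun h => h.symm, fun h h' => h.trans h'⟩⟩
  have heq : T.colorChar c i = r.classes := by
    ext P
    constructor
    · rintro ⟨x, rfl⟩
      refine ⟨x, ?_⟩
      ext y
      exact ⟨fun h => r.symm' h, fun h => r.symm' h⟩
    · rintro ⟨y, rfl⟩
      exact ⟨y, by ext z; exact ⟨fun h => r.symm' h, fun h => r.symm' h⟩⟩
  rw [heq]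
  exact Setoid.isPartition_classes r

lemma card_eq_four_of_coloring (T : PhyloTree X) (hbin : T.IsBinary)
    (hX : 3 ≤ Nat.card X) (c : T.InternalColoring 1) : Nat.card X = 4 := by
  have hVfin : Finite T.V := T.vfin
  obtain ⟨u, v, ⟨huv, hu, hv⟩, -⟩ := c.surj 0
  have hnoU : ∀ w, T.G.Adj u w → w ≠ v → w ∈ Set.range T.φ := by
    intro w hw hwv
    by_contra hint
    exact (c.proper v u w ⟨huv.symm, hv, hu⟩ ⟨hw, hu, hint⟩ (Ne.symm hwv))
      (Subsingleton.elim _ _)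
  have hnoV : ∀ w, T.G.Adj v w → w ≠ u → w ∈ Set.range T.φ := by
    intro w hw hwu
    by_contra hint
    exact (c.proper u v w ⟨huv, hu, hv⟩ ⟨hw, hv, hint⟩ (Ne.symm hwu))
      (Subsingleton.elim _ _)
  have hvmem : v ∈ T.G.neighborSet u := huv
  have humem : u ∈ T.G.neighborSet v := huv.symm
  have h2u : (T.G.neighborSet u \ {v}).ncard = 2 := by
    rw [Set.ncard_diff_singleton_of_mem hvmem, hbin u hu]
  have h2v : (T.G.neighborSet v \ {u}).ncard = 2 := by
    rw [Set.ncard_diff_singleton_of_mem humem, hbin v hv]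
  obtain ⟨a, b, hab, hNab⟩ := Set.ncard_eq_two.mp h2u
  obtain ⟨d, e, hde, hNde⟩ := Set.ncard_eq_two.mp h2v
  have haN : a ∈ T.G.neighborSet u \ {v} := by rw [hNab]; exact Or.inl rfl
  have hbN : b ∈ T.G.neighborSet u \ {v} := by rw [hNab]; exact Or.inr rfl
  have hdN : d ∈ T.G.neighborSet v \ {u} := by rw [hNde]; exact Or.inl rfl
  have heN : e ∈ T.G.neighborSet v \ {u} := by rw [hNde]; exact Or.inr rfl
  obtain ⟨xa, rfl⟩ := hnoU a haN.1 haN.2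
  obtain ⟨xb, rfl⟩ := hnoU b hbN.1 hbN.2
  obtain ⟨xd, rfl⟩ := hnoV d hdN.1 hdN.2
  obtain ⟨xe, rfl⟩ := hnoV e heN.1 heN.2
  have hadjua : T.G.Adj (T.φ xa) u := haN.1.symm
  have hadjub : T.G.Adj (T.φ xb) u := hbN.1.symm
  have hadjvd : T.G.Adj (T.φ xd) v := hdN.1.symm
  have hadjve : T.G.Adj (T.φ xe) v := heN.1.symm
  have hNu : T.G.neighborSet u = {v, T.φ xa, T.φ xb} := by
    rw [← Set.insert_eq_of_mem hvmem, ← Set.insert_diff_singleton, hNab]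
  have hNv : T.G.neighborSet v = {u, T.φ xd, T.φ xe} := by
    rw [← Set.insert_eq_of_mem humem, ← Set.insert_diff_singleton, hNde]
  have hNa := T.leaf_nbhd hadjua
  have hNb := T.leaf_nbhd hadjub
  have hNd := T.leaf_nbhd hadjvd
  have hNe := T.leaf_nbhd hadjve
  -- cross distinctness
  have hadv : T.φ xa ≠ T.φ xd := fun h => huv.ne (T.hub_eq hadjua (h ▸ hadjvd))
  have haev : T.φ xa ≠ T.φ xe := fun h => huv.ne (T.hub_eq hadjua (h ▸ hadjve))
  have hbdv : T.φ xb ≠ T.φ xd := fun h => huv.ne (T.hub_eq hadjub (h ▸ hadjvd))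
  have hbev : T.φ xb ≠ T.φ xe := fun h => huv.ne (T.hub_eq hadjub (h ▸ hadjve))
  -- closure
  have hcl : ∀ s ∈ ({u, v, T.φ xa, T.φ xb, T.φ xd, T.φ xe} : Set T.V), ∀ t, T.G.Adj s t →
      t ∈ ({u, v, T.φ xa, T.φ xb, T.φ xd, T.φ xe} : Set T.V) := by
    intro s hs t ht
    have hts : t ∈ T.G.neighborSet s := ht
    simp only [Set.mem_insert_iff, Set.mem_singleton_iff] at hs ⊢
    rcases hs with h | h | h | h | h | h <;> rw [h] at hts
    · rw [hNu] at hts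
      simp only [Set.mem_insert_iff, Set.mem_singleton_iff] at hts
      tauto
    · rw [hNv] at hts
      simp only [Set.mem_insert_iff, Set.mem_singleton_iff] at hts
      tauto
    · rw [hNa] at hts
      exact Or.inl (Set.mem_singleton_iff.mp hts)
    · rw [hNb] at hts
      exact Or.inl (Set.mem_singleton_iff.mp hts)
    · rw [hNd] at hts
      exact Or.inr (Or.inl (Set.mem_singleton_iff.mp hts))
    · rw [hNe] at hts
      exact Or.inr (Or.inl (Set.mem_singleton_iff.mp hts))
  have hall : ∀ w : T.V, w ∈ ({u, v, T.φ xa, T.φ xb, T.φ xd, T.φ xe} : Set T.V) := by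
    intro w
    obtain ⟨p⟩ := T.isTree.isConnected.preconnected u w
    exact walk_closed hcl p (Set.mem_insert _ _)
  have hXuniv : (Set.univ : Set X) = {xa, xb, xd, xe} := by
    apply Set.eq_of_subset_of_subset
    · intro x _
      have hx := hall (T.φ x)
      simp only [Set.mem_insert_iff, Set.mem_singleton_iff] at hx ⊢
      rcases hx with h | h | h | h | h | h
      · exact absurd h (fun hh => hu ⟨x, hh⟩)
      · exact absurd h (fun hh => hv ⟨x, hh⟩)
      · exact Or.inl (T.φinj h)
      · exact Or.inr (Or.inl (T.φinj h))
      · exact Or.inr (Or.inr (Or.inl (T.φinj h)))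
      · exact Or.inr (Or.inr (Or.inr (T.φinj h)))
    · exact fun x _ => Set.mem_univ x
  have hxab : xa ≠ xb := fun h => hab (congrArg T.φ h)
  have hxde : xd ≠ xe := fun h => hde (congrArg T.φ h)
  have hxad : xa ≠ xd := fun h => hadv (congrArg T.φ h)
  have hxae : xa ≠ xe := fun h => haev (congrArg T.φ h)
  have hxbd : xb ≠ xd := fun h => hbdv (congrArg T.φ h)
  have hxbe : xb ≠ xe := fun h => hbev (congrArg T.φ h)
  rw [← Set.ncard_univ, hXuniv, Set.ncard_insert_of_notMem (by simp [hxab, hxad, hxae]),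
    Set.ncard_insert_of_notMem (by simp [hxbd, hxbe]), Set.ncard_pair hxde]

lemma defined_of_card_four (T : PhyloTree X) (hbin : T.IsBinary) (hX4 : Nat.card X = 4) :
    ∃ c : T.InternalColoring 1, T.DefinedByColoring c := by
  obtain ⟨x1, x2, x3, x4, h12, h13, h14, h23, h24, h34, hall, u, v, q⟩ :=
    T.exists_quartet_binary hbin hX4
  have hIE : ∀ w z : T.V, T.IsInternalEdge w z ↔ ((w = u ∧ z = v) ∨ (w = v ∧ z = u)) := by
    intro w z
    constructor
    · rintro ⟨hadj, hw, hz⟩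
      rcases q.hI w hw with rfl | rfl <;> rcases q.hI z hz with rfl | rfl
      · exact absurd rfl hadj.ne
      · exact Or.inl ⟨rfl, rfl⟩
      · exact Or.inr ⟨rfl, rfl⟩
      · exact absurd rfl hadj.ne
    · rintro (⟨rfl, rfl⟩ | ⟨rfl, rfl⟩)
      · exact ⟨q.huv, q.hu, q.hv⟩
      · exact ⟨q.huv.symm, q.hv, q.hu⟩
  have hNoAdj : ∀ a b d : T.V, T.IsInternalEdge a b → T.IsInternalEdge b d → a ≠ d → False := by
    intro a b d hab hbd hne
    have hneuv := q.huv.ne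
    rcases (hIE a b).mp hab with ⟨rfl, rfl⟩ | ⟨rfl, rfl⟩ <;>
      rcases (hIE _ d).mp hbd with ⟨h', rfl⟩ | ⟨h', rfl⟩ <;> simp_all
  let c : T.InternalColoring 1 :=
    ⟨fun _ => 0, fun a b d hab hbd hne => (hNoAdj a b d hab hbd hne).elim,
      fun _ => ⟨u, v, (hIE u v).mpr (Or.inl ⟨rfl, rfl⟩), Subsingleton.elim _ _⟩⟩
  have hDel : ∀ w z : T.V, (T.delGraph c 0).Adj w z ↔
      (T.G.Adj w z ∧ ¬ T.IsInternalEdge w z) := by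
    intro w z
    rw [delGraph, SimpleGraph.deleteEdges_adj]
    refine and_congr_right (fun _ => ?_)
    rw [not_iff_not]
    constructor
    · rintro ⟨-, a, b, he, hab⟩
      rcases Sym2.eq_iff.mp he with ⟨rfl, rfl⟩ | ⟨rfl, rfl⟩
      · exact hab
      · exact ⟨hab.1.symm, hab.2.2, hab.2.1⟩
    · exact fun h => ⟨rfl, w, z, rfl, h⟩
  have hIEuv : T.IsInternalEdge u v := (hIE u v).mpr (Or.inl ⟨rfl, rfl⟩)
  -- closed component sets
  have hclU : ∀ s ∈ ({u, T.φ x1, T.φ x2} : Set T.V), ∀ t, (T.delGraph c 0).Adj s t →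
      t ∈ ({u, T.φ x1, T.φ x2} : Set T.V) := by
    intro s hs t ht
    rw [hDel] at ht
    simp only [Set.mem_insert_iff, Set.mem_singleton_iff] at hs ⊢
    rcases hs with rfl | rfl | rfl
    · have hmem := q.nu_subset hall ht.1
      simp only [Set.mem_insert_iff, Set.mem_singleton_iff] at hmem
      rcases hmem with rfl | rfl | rfl
      · exact absurd ((hIE s t).mpr (Or.inl ⟨rfl, rfl⟩)) ht.2
      · exact Or.inr (Or.inl rfl)
      · exact Or.inr (Or.inr rfl)
    · exact Or.inl (T.hub_eq ht.1 q.h1)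
    · exact Or.inl (T.hub_eq ht.1 q.h2)
  have hclV : ∀ s ∈ ({v, T.φ x3, T.φ x4} : Set T.V), ∀ t, (T.delGraph c 0).Adj s t →
      t ∈ ({v, T.φ x3, T.φ x4} : Set T.V) := by
    intro s hs t ht
    rw [hDel] at ht
    simp only [Set.mem_insert_iff, Set.mem_singleton_iff] at hs ⊢
    rcases hs with rfl | rfl | rfl
    · have hmem := q.nv_subset hall ht.1
      simp only [Set.mem_insert_iff, Set.mem_singleton_iff] at hmem
      rcases hmem with rfl | rfl | rfl
      · exact absurd ((hIE s t).mpr (Or.inr ⟨rfl, rfl⟩)) ht.2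
      · exact Or.inr (Or.inl rfl)
      · exact Or.inr (Or.inr rfl)
    · exact Or.inl (T.hub_eq ht.1 q.h3)
    · exact Or.inl (T.hub_eq ht.1 q.h4)
  -- explicit reachabilities
  have hd1 : (T.delGraph c 0).Adj (T.φ x1) u := by
    rw [hDel]
    refine ⟨q.h1, fun h => ?_⟩
    rcases (hIE _ _).mp h with ⟨h', -⟩ | ⟨h', -⟩
    · exact q.leaf_ne_u x1 h'
    · exact q.leaf_ne_v x1 h'
  have hd2 : (T.delGraph c 0).Adj (T.φ x2) u := by
    rw [hDel]
    refine ⟨q.h2, fun h => ?_⟩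
    rcases (hIE _ _).mp h with ⟨h', -⟩ | ⟨h', -⟩
    · exact q.leaf_ne_u x2 h'
    · exact q.leaf_ne_v x2 h'
  have hd3 : (T.delGraph c 0).Adj (T.φ x3) v := by
    rw [hDel]
    refine ⟨q.h3, fun h => ?_⟩
    rcases (hIE _ _).mp h with ⟨h', -⟩ | ⟨h', -⟩
    · exact q.leaf_ne_u x3 h'
    · exact q.leaf_ne_v x3 h'
  have hd4 : (T.delGraph c 0).Adj (T.φ x4) v := by
    rw [hDel]
    refine ⟨q.h4, fun h => ?_⟩
    rcases (hIE _ _).mp h with ⟨h', -⟩ | ⟨h', -⟩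
    · exact q.leaf_ne_u x4 h'
    · exact q.leaf_ne_v x4 h'
  have hr12 : (T.delGraph c 0).Reachable (T.φ x1) (T.φ x2) :=
    ⟨SimpleGraph.Walk.cons hd1 (SimpleGraph.Walk.cons hd2.symm SimpleGraph.Walk.nil)⟩
  have hr34 : (T.delGraph c 0).Reachable (T.φ x3) (T.φ x4) :=
    ⟨SimpleGraph.Walk.cons hd3 (SimpleGraph.Walk.cons hd4.symm SimpleGraph.Walk.nil)⟩
  have hclassU : ∀ x, (x = x1 ∨ x = x2) →
      {y : X | (T.delGraph c 0).Reachable (T.φ x) (T.φ y)} = {x1, x2} := by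
    intro x hx
    ext y
    simp only [Set.mem_setOf_eq, Set.mem_insert_iff, Set.mem_singleton_iff]
    constructor
    · intro hr
      obtain ⟨p⟩ := hr
      have hstart : T.φ x ∈ ({u, T.φ x1, T.φ x2} : Set T.V) := by
        rcases hx with rfl | rfl
        · exact Or.inr (Or.inl rfl)
        · exact Or.inr (Or.inr rfl)
      have hy := walk_closed hclU p hstart
      simp only [Set.mem_insert_iff, Set.mem_singleton_iff] at hy
      rcases hy with h | h | h
      · exact absurd h (q.leaf_ne_u y)
      · exact Or.inl (T.φinj h)
      · exact Or.inr (T.φinj h)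
    · intro hy
      rcases hx with rfl | rfl <;> rcases hy with rfl | rfl
      · exact SimpleGraph.Reachable.refl _
      · exact hr12
      · exact hr12.symm
      · exact SimpleGraph.Reachable.refl _
  have hclassV : ∀ x, (x = x3 ∨ x = x4) →
      {y : X | (T.delGraph c 0).Reachable (T.φ x) (T.φ y)} = {x3, x4} := by
    intro x hx
    ext y
    simp only [Set.mem_setOf_eq, Set.mem_insert_iff, Set.mem_singleton_iff]
    constructor
    · intro hr
      obtain ⟨p⟩ := hr
      have hstart : T.φ x ∈ ({v, T.φ x3, T.φ x4} : Set T.V) := by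
        rcases hx with rfl | rfl
        · exact Or.inr (Or.inl rfl)
        · exact Or.inr (Or.inr rfl)
      have hy := walk_closed hclV p hstart
      simp only [Set.mem_insert_iff, Set.mem_singleton_iff] at hy
      rcases hy with h | h | h
      · exact absurd h (q.leaf_ne_v y)
      · exact Or.inl (T.φinj h)
      · exact Or.inr (T.φinj h)
    · intro hy
      rcases hx with rfl | rfl <;> rcases hy with rfl | rfl
      · exact SimpleGraph.Reachable.refl _
      · exact hr34
      · exact hr34.symm
      · exact SimpleGraph.Reachable.refl _
  have hCC : T.colorChar c 0 = {({x1, x2} : Set X), ({x3, x4} : Set X)} := by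
    ext P
    constructor
    · rintro ⟨x, rfl⟩
      rcases hall x with rfl | rfl | rfl | rfl
      · exact Set.mem_insert_iff.mpr (Or.inl (hclassU _ (Or.inl rfl)))
      · exact Set.mem_insert_iff.mpr (Or.inl (hclassU _ (Or.inr rfl)))
      · exact Set.mem_insert_iff.mpr (Or.inr (hclassV _ (Or.inl rfl)))
      · exact Set.mem_insert_iff.mpr (Or.inr (hclassV _ (Or.inr rfl)))
    · intro hP
      rcases Set.mem_insert_iff.mp hP with rfl | hP
      · exact ⟨x1, (hclassU _ (Or.inl rfl)).symm⟩
      · rw [Set.mem_singleton_iff] at hP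
        subst hP
        exact ⟨x3, (hclassV _ (Or.inl rfl)).symm⟩
  refine ⟨c, ?_, ?_, ?_⟩
  · rintro χ ⟨i, rfl⟩
    exact T.partition_colorChar c i
  · rintro χ ⟨i, rfl⟩
    obtain rfl : i = 0 := Subsingleton.elim i 0
    rw [hCC]
    -- convexity
    have hdisjsets : Disjoint ({T.φ x1, u, T.φ x2} : Set T.V)
        ({T.φ x3, v, T.φ x4} : Set T.V) := by
      rw [Set.disjoint_left]
      intro t htA htB
      simp only [Set.mem_insert_iff, Set.mem_singleton_iff] at htA htB
      rcases htA with rfl | rfl | rfl <;> rcases htB with h | h | h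
      · exact h13 (T.φinj h)
      · exact q.leaf_ne_v x1 h
      · exact h14 (T.φinj h)
      · exact q.leaf_ne_u x3 h.symm
      · exact q.huv.ne h
      · exact q.leaf_ne_u x4 h.symm
      · exact h23 (T.φinj h)
      · exact q.leaf_ne_v x2 h
      · exact h24 (T.φinj h)
    have hmain : Disjoint (T.span {x1, x2}) (T.span {x3, x4}) :=
      Set.disjoint_of_subset (q.span_pair_subset h12) (q.span_pair_subset' h34) hdisjsets
    intro A hA B hB hne
    have hABne : ({x1, x2} : Set X) ≠ {x3, x4} := by
      intro h
      have : x1 ∈ ({x3, x4} : Set X) := h ▸ Set.mem_insert _ _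
      rcases this with h' | h'
      · exact h13 h'
      · exact h14 h'
    simp only [Set.mem_insert_iff, Set.mem_singleton_iff] at hA hB
    rcases hA with rfl | rfl <;> rcases hB with rfl | rfl
    · exact absurd rfl hne
    · exact hmain
    · exact hmain.symm
    · exact absurd rfl hne
  · intro T' hconv
    have hχ := hconv (T.colorChar c 0) ⟨0, rfl⟩
    rw [hCC] at hχ
    have hABne : ({x1, x2} : Set X) ≠ {x3, x4} := by
      intro h
      have : x1 ∈ ({x3, x4} : Set X) := h ▸ Set.mem_insert _ _
      rcases this with h' | h'
      · exact h13 h'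
      · exact h14 h'
    have hdis : Disjoint (T'.span {x1, x2}) (T'.span {x3, x4}) :=
      hχ _ (Set.mem_insert _ _) _
        (Set.mem_insert_iff.mpr (Or.inr (Set.mem_singleton _))) hABne
    obtain ⟨u', v', q'⟩ := T'.exists_quartet_convex hX4 h12 h13 h14 h23 h24 h34 hdis
    exact labelIso_of_quartets hall q q'

end PhyloTree

/-- a binary phylogenetic `X`-tree is defined by an internal
`1`-colouring iff `|X| = 4`. -/
theorem defined_by_one_coloring_iff {X : Type} (T : PhyloTree X)
    (hbin : T.IsBinary) (hX : 3 ≤ Nat.card X) :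
    (∃ c : T.InternalColoring 1, T.DefinedByColoring c) ↔ Nat.card X = 4 := by
  constructor
  · rintro ⟨c, -⟩
    exact T.card_eq_four_of_coloring hbin hX c
  · intro hX4
    exact T.defined_of_card_four hbin hX4
end

section
/- Let T be a binary phylogenetic X-tree with |X| ≥ 4 having no internal subtree isomorphic to the snowflake. Then either T is a cherried caterpillar or T has a leaf that is not in a cherry. -/
open SimpleGraph

/-- `T` is obtained from `S` by replacing each leaf of `S` with a cherry:
each pendant edge of `S` is subdivided (subdivision vertex `σ y`) and a new leaf
`ζ y` is attached to the subdivision vertex. The leaves of `T` labelled `g y` and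
`h y` form the cherry replacing the leaf `y` of `S`. -/
def IsCherryReplacement {X Y : Type} (S : PhyloTree Y) (T : PhyloTree X) : Prop :=
  ∃ (ψ : S.V → T.V) (σ ζ : Y → T.V) (g h : Y → X),
    Function.Injective ψ ∧ Function.Injective σ ∧ Function.Injective ζ ∧
    (∀ (a : S.V) (y : Y), ψ a ≠ σ y) ∧
    (∀ (a : S.V) (y : Y), ψ a ≠ ζ y) ∧
    (∀ y y' : Y, σ y ≠ ζ y') ∧
    (∀ v : T.V, v ∈ Set.range ψ ∨ v ∈ Set.range σ ∨ v ∈ Set.range ζ) ∧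
    (∀ y : Y, T.φ (g y) = ψ (S.φ y)) ∧
    (∀ y : Y, T.φ (h y) = ζ y) ∧
    (∀ x : X, (∃ y : Y, x = g y) ∨ (∃ y : Y, x = h y)) ∧
    (∀ a b : S.V, T.G.Adj (ψ a) (ψ b) ↔
      (S.G.Adj a b ∧ a ∉ Set.range S.φ ∧ b ∉ Set.range S.φ)) ∧
    (∀ (a : S.V) (y : Y), T.G.Adj (ψ a) (σ y) ↔ (a = S.φ y ∨ S.G.Adj (S.φ y) a)) ∧
    (∀ (a : S.V) (y : Y), ¬ T.G.Adj (ψ a) (ζ y)) ∧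
    (∀ y y' : Y, ¬ T.G.Adj (σ y) (σ y')) ∧
    (∀ y y' : Y, T.G.Adj (σ y) (ζ y') ↔ y = y')

/-- A cherried caterpillar: either a binary phylogenetic tree on four leaves, or a
tree obtained from a (binary) caterpillar by replacing each leaf with a cherry. -/
def IsCherriedCaterpillar {X : Type} (T : PhyloTree X) : Prop :=
  (T.IsBinary ∧ Nat.card X = 4) ∨
  ∃ (Y : Type) (S : PhyloTree Y), S.IsBinary ∧ S.IsCaterpillar ∧
    3 ≤ Nat.card Y ∧ IsCherryReplacement S T

/-- `T` has an internal subtree isomorphic to the snowflake: ten distinct internal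
vertices — a centre (`none`), three middle vertices (`some (i, none)`) and six outer
vertices (`some (i, some j)`) — with the snowflake adjacencies. -/
def HasSnowflake {X : Type} (T : PhyloTree X) : Prop :=
  ∃ ν : Option (Fin 3 × Option (Fin 2)) → T.V,
    Function.Injective ν ∧
    (∀ p, T.IsInternal (ν p)) ∧
    (∀ i : Fin 3, T.G.Adj (ν none) (ν (some (i, none)))) ∧
    (∀ (i : Fin 3) (j : Fin 2),
      T.G.Adj (ν (some (i, none))) (ν (some (i, some j))))

namespace SFAux

open SimpleGraph Set

variable {X : Type} (T : PhyloTree X)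

/-- A leaf has a unique neighbour. -/
lemma leaf_nbr_unique (x : X) : ∃ v, T.G.neighborSet (T.φ x) = {v} := by
  have h := (T.leaf_iff (T.φ x)).mpr ⟨x, rfl⟩
  rwa [Set.ncard_eq_one] at h

/-- The unique neighbour of a leaf. -/
noncomputable def nbr (x : X) : T.V := (leaf_nbr_unique T x).choose

lemma nbhd_leaf (x : X) : T.G.neighborSet (T.φ x) = {nbr T x} :=
  (leaf_nbr_unique T x).choose_spec

lemma adj_nbr (x : X) : T.G.Adj (T.φ x) (nbr T x) := by
  have : nbr T x ∈ T.G.neighborSet (T.φ x) := by rw [nbhd_leaf T x]; rfl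
  exact this

lemma eq_nbr {x : X} {v : T.V} (h : T.G.Adj (T.φ x) v) : v = nbr T x := by
  have : v ∈ T.G.neighborSet (T.φ x) := h
  rwa [nbhd_leaf T x, Set.mem_singleton_iff] at this

/-- A cherry vertex: internal and adjacent to a leaf. -/
def CherryV (v : T.V) : Prop := v ∉ Set.range T.φ ∧ ∃ x, T.G.Adj (T.φ x) v

/-- A good vertex: internal and not adjacent to any leaf. -/
def Good (v : T.V) : Prop := v ∉ Set.range T.φ ∧ ¬ ∃ x, T.G.Adj (T.φ x) v

lemma not_cherry_of_good {v : T.V} (h : Good T v) : ¬ CherryV T v := fun hc => h.2 hc.2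

lemma internal_cases {v : T.V} (h : v ∉ Set.range T.φ) : Good T v ∨ CherryV T v := by
  by_cases hx : ∃ x, T.G.Adj (T.φ x) v
  · exact Or.inr ⟨h, hx⟩
  · exact Or.inl ⟨h, hx⟩

lemma good_nbr_internal {v u : T.V} (h : Good T v) (hu : T.G.Adj v u) :
    u ∉ Set.range T.φ := by
  rintro ⟨x, rfl⟩
  exact h.2 ⟨x, hu.symm⟩

end SFAux
namespace SFAux

open SimpleGraph Set

variable {X : Type} (T : PhyloTree X)

lemma card_eq_ncard_range : Nat.card X = (Set.range T.φ).ncard := by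
  rw [← Nat.card_coe_set_eq, Nat.card_range_of_injective T.φinj]

lemma exists_path (v u : T.V) : ∃ q : T.G.Walk v u, q.IsPath := by
  classical
  obtain ⟨p⟩ := (T.isTree.isConnected.preconnected v u)
  exact ⟨p.bypass, p.bypass_isPath⟩

/-- If every neighbour of a vertex is a leaf, the tree is tiny. -/
lemma small_tree (hbin : T.IsBinary) {v : T.V} (hv : v ∉ Set.range T.φ)
    (hall : ∀ u, T.G.Adj v u → u ∈ Set.range T.φ) : Nat.card X ≤ 3 := by
  haveI := T.vfin
  have key : ∀ (u : T.V) (q : T.G.Walk v u), q.IsPath → u = v ∨ T.G.Adj v u := by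
    intro u q hq
    cases q with
    | nil => exact Or.inl rfl
    | cons h q =>
      rename_i c
      cases q with
      | nil => exact Or.inr h
      | cons h' q' =>
        rename_i d
        exfalso
        rw [SimpleGraph.Walk.cons_isPath_iff] at hq
        obtain ⟨x, hx⟩ := hall c h
        subst hx
        have hd : d = nbr T x := eq_nbr T h'
        have hv' : v = nbr T x := eq_nbr T h.symm
        apply hq.2
        rw [hv', ← hd]
        rw [SimpleGraph.Walk.support_cons]
        exact List.mem_cons_of_mem _ (SimpleGraph.Walk.start_mem_support q')
  have hsub : Set.range T.φ ⊆ T.G.neighborSet v := by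
    rintro _ ⟨x, rfl⟩
    obtain ⟨q, hq⟩ := exists_path T v (T.φ x)
    rcases key (T.φ x) q hq with h | h
    · exact absurd (h ▸ Set.mem_range_self x) hv
    · exact h
  calc Nat.card X = (Set.range T.φ).ncard := card_eq_ncard_range T
    _ ≤ (T.G.neighborSet v).ncard := Set.ncard_le_ncard hsub (Set.toFinite _)
    _ = 3 := hbin v hv

/-- If two adjacent internal vertices have all other neighbours leaves,
the tree is small. -/
lemma small_tree2 (hbin : T.IsBinary) {v w : T.V} (hvw : T.G.Adj v w)
    (hv : v ∉ Set.range T.φ) (hw : w ∉ Set.range T.φ)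
    (hallv : ∀ u, T.G.Adj v u → u ≠ w → u ∈ Set.range T.φ)
    (hallw : ∀ u, T.G.Adj w u → u ≠ v → u ∈ Set.range T.φ) : Nat.card X ≤ 4 := by
  haveI := T.vfin
  have key : ∀ (u : T.V) (q : T.G.Walk v u), q.IsPath →
      u = v ∨ u = w ∨ T.G.Adj v u ∨ T.G.Adj w u := by
    intro u q hq
    cases q with
    | nil => exact Or.inl rfl
    | cons h q =>
      rename_i c
      cases q with
      | nil => exact Or.inr (Or.inr (Or.inl h))
      | cons h' q' =>
        rename_i d
        rw [SimpleGraph.Walk.cons_isPath_iff] at hq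
        by_cases hcw : c = w
        · -- path v - w - d - ...
          cases q' with
          | nil =>
            exact Or.inr (Or.inr (Or.inr (hcw ▸ h')))
          | cons h'' q'' =>
            rename_i e
            exfalso
            rw [SimpleGraph.Walk.cons_isPath_iff] at hq
            have hd : d ∈ Set.range T.φ := by
              apply hallw d (hcw ▸ h')
              intro hdv
              have hdmem : d ∈ (SimpleGraph.Walk.cons h' (SimpleGraph.Walk.cons h'' q'')).support := by
                rw [SimpleGraph.Walk.support_cons]
                exact List.mem_cons_of_mem _ (SimpleGraph.Walk.start_mem_support _)
              exact hq.2 (hdv ▸ hdmem)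
            obtain ⟨x, hx⟩ := hd
            subst hx
            have he : e = nbr T x := eq_nbr T h''
            have hw' : c = nbr T x := eq_nbr T h'.symm
            apply hq.1.2
            rw [hw', ← he]
            rw [SimpleGraph.Walk.support_cons]
            exact List.mem_cons_of_mem _ (SimpleGraph.Walk.start_mem_support q'')
        · exfalso
          obtain ⟨x, hx⟩ := hallv c h hcw
          subst hx
          have hd : d = nbr T x := eq_nbr T h'
          have hv' : v = nbr T x := eq_nbr T h.symm
          apply hq.2
          rw [hv', ← hd]
          rw [SimpleGraph.Walk.support_cons]
          exact List.mem_cons_of_mem _ (SimpleGraph.Walk.start_mem_support q')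
  have hsub : Set.range T.φ ⊆ T.G.neighborSet v ∪ T.G.neighborSet w := by
    rintro _ ⟨x, rfl⟩
    obtain ⟨q, hq⟩ := exists_path T v (T.φ x)
    rcases key (T.φ x) q hq with h | h | h | h
    · exact absurd (h ▸ Set.mem_range_self x) hv
    · exact absurd (h ▸ Set.mem_range_self x) hw
    · exact Or.inl h
    · exact Or.inr h
  have hsub' : Set.range T.φ ⊆ (T.G.neighborSet v \ {w}) ∪ (T.G.neighborSet w \ {v}) := by
    rintro u hu
    rcases hsub hu with h | h
    · left
      refine ⟨h, ?_⟩
      simp only [Set.mem_singleton_iff]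
      rintro rfl
      exact hw hu
    · right
      refine ⟨h, ?_⟩
      simp only [Set.mem_singleton_iff]
      rintro rfl
      exact hv hu
  have h1 : (T.G.neighborSet v \ {w}).ncard = 2 := by
    have hm : w ∈ T.G.neighborSet v := hvw
    rw [Set.ncard_diff_singleton_of_mem hm, hbin v hv]
  have h2 : (T.G.neighborSet w \ {v}).ncard = 2 := by
    have hm : v ∈ T.G.neighborSet w := hvw.symm
    rw [Set.ncard_diff_singleton_of_mem hm, hbin w hw]
  calc Nat.card X = (Set.range T.φ).ncard := card_eq_ncard_range T
    _ ≤ ((T.G.neighborSet v \ {w}) ∪ (T.G.neighborSet w \ {v})).ncard :=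
        Set.ncard_le_ncard hsub' (Set.toFinite _)
    _ ≤ (T.G.neighborSet v \ {w}).ncard + (T.G.neighborSet w \ {v}).ncard :=
        Set.ncard_union_le _ _
    _ = 4 := by rw [h1, h2]

end SFAux
namespace SFAux

open SimpleGraph Set

attribute [local instance] Classical.propDecidable

variable {X : Type} (T : PhyloTree X)

/-- The type of cherry vertices. -/
def CVtx := {v : T.V // CherryV T v}

lemma nbr_internal (hc : ∀ x : X, ∃ y, T.IsCherry x y) (x : X) :
    nbr T x ∉ Set.range T.φ := by
  obtain ⟨y, hxy, v, hxv, hyv⟩ := hc x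
  have hv : v = nbr T x := eq_nbr T hxv
  subst hv
  rintro ⟨z, hz⟩
  have h1 : T.φ x ∈ T.G.neighborSet (T.φ z) := hz ▸ hxv.symm
  have h2 : T.φ y ∈ T.G.neighborSet (T.φ z) := hz ▸ hyv.symm
  rw [nbhd_leaf T z, Set.mem_singleton_iff] at h1 h2
  exact hxy (T.φinj (h1.trans h2.symm))

/-- Structure data for a snowflake-free binary tree where every leaf is in
a cherry. -/
structure Setup (T : PhyloTree X) where
  hbin : T.IsBinary
  hc : ∀ x : X, ∃ y, T.IsCherry x y
  h5 : 5 ≤ Nat.card X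
  x1 : CVtx T → X
  x2 : CVtx T → X
  st : CVtx T → T.V
  hx12 : ∀ y, x1 y ≠ x2 y
  hadj1 : ∀ y, T.G.Adj (T.φ (x1 y)) y.val
  hadj2 : ∀ y, T.G.Adj (T.φ (x2 y)) y.val
  hstint : ∀ y, st y ∉ Set.range T.φ
  hnbhd : ∀ y, T.G.neighborSet y.val = {T.φ (x1 y), T.φ (x2 y), st y}

variable {T}

namespace Setup

variable (E : Setup T)
include E

lemma st_adj (y : CVtx T) : T.G.Adj y.val (E.st y) := by
  have : E.st y ∈ T.G.neighborSet y.val := by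
    rw [E.hnbhd y]; right; right; rfl
  exact this

lemma leaf_adj_cases {x : X} {y : CVtx T} (h : T.G.Adj (T.φ x) y.val) :
    x = E.x1 y ∨ x = E.x2 y := by
  have : T.φ x ∈ T.G.neighborSet y.val := h.symm
  rw [E.hnbhd y] at this
  rcases this with h1 | h1 | h1
  · exact Or.inl (T.φinj h1)
  · exact Or.inr (T.φinj h1)
  · exact absurd ⟨x, h1⟩ (E.hstint y)

lemma internal_adj_eq_st {u : T.V} {y : CVtx T} (h : T.G.Adj y.val u)
    (hu : u ∉ Set.range T.φ) : u = E.st y := by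
  have : u ∈ T.G.neighborSet y.val := h
  rw [E.hnbhd y] at this
  rcases this with h1 | h1 | h1
  · exact absurd ⟨E.x1 y, h1.symm⟩ hu
  · exact absurd ⟨E.x2 y, h1.symm⟩ hu
  · exact h1

/-- The cherry vertex attached to a leaf. -/
noncomputable def cherryOf (x : X) : CVtx T :=
  ⟨nbr T x, nbr_internal T E.hc x, ⟨x, adj_nbr T x⟩⟩

lemma cherryOf_of_adj {x : X} {y : CVtx T} (h : T.G.Adj (T.φ x) y.val) :
    E.cherryOf x = y := Subtype.ext ((eq_nbr T h).symm)

lemma cherryOf_x1 (y : CVtx T) : E.cherryOf (E.x1 y) = y :=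
  E.cherryOf_of_adj (E.hadj1 y)

lemma cherryOf_x2 (y : CVtx T) : E.cherryOf (E.x2 y) = y :=
  E.cherryOf_of_adj (E.hadj2 y)

lemma x_cases (x : X) : x = E.x1 (E.cherryOf x) ∨ x = E.x2 (E.cherryOf x) :=
  E.leaf_adj_cases (adj_nbr T x)

lemma x1_inj : Function.Injective E.x1 := by
  intro y y' h
  rw [← E.cherryOf_x1 y, ← E.cherryOf_x1 y', h]

/-- The pairing of leaves into cherries. -/
noncomputable def pairEquiv : X ≃ CVtx T × Bool where
  toFun x := (E.cherryOf x, if x = E.x1 (E.cherryOf x) then true else false)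
  invFun p := if p.2 then E.x1 p.1 else E.x2 p.1
  left_inv x := by
    rcases E.x_cases x with h | h
    · simp [← h]
    · have hne : x ≠ E.x1 (E.cherryOf x) := fun hh => E.hx12 _ (hh.symm.trans h)
      simp [hne, ← h]
  right_inv p := by
    obtain ⟨y, b⟩ := p
    have hne : E.x2 y ≠ E.x1 (E.cherryOf (E.x2 y)) := by
      rw [E.cherryOf_x2]
      exact fun hh => (E.hx12 y) hh.symm
    cases b
    · simp [hne, E.cherryOf_x2]
      exact fun hh => E.hx12 y hh.symm
    · simp [E.cherryOf_x1]


lemma card_eq : Nat.card X = 2 * Nat.card (CVtx T) := by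
  have h2 : Nat.card Bool = 2 := by simp
  rw [Nat.card_congr E.pairEquiv, Nat.card_prod, h2, Nat.mul_comm]

lemma hY3 : 3 ≤ Nat.card (CVtx T) := by
  have := E.card_eq
  have := E.h5
  omega

lemma h6 : 6 ≤ Nat.card X := by
  have := E.card_eq
  have := E.h5
  omega

lemma st_good (y : CVtx T) : Good T (E.st y) := by
  refine ⟨E.hstint y, ?_⟩
  rintro ⟨z, hz⟩
  -- st y is a cherry vertex; derive smallness
  set y' : CVtx T := ⟨E.st y, E.hstint y, ⟨z, hz⟩⟩ with hy'
  have hyval : y.val = E.st y' := by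
    apply E.internal_adj_eq_st (y := y')
    · exact (E.st_adj y).symm
    · exact y.2.1
  have h4 : Nat.card X ≤ 4 := by
    apply small_tree2 T E.hbin (E.st_adj y) y.2.1 (E.hstint y)
    · intro u hu hne
      have : u ∈ T.G.neighborSet y.val := hu
      rw [E.hnbhd y] at this
      rcases this with h1 | h1 | h1
      · exact ⟨E.x1 y, h1.symm⟩
      · exact ⟨E.x2 y, h1.symm⟩
      · exact absurd h1 hne
    · intro u hu hne
      have : u ∈ T.G.neighborSet y'.val := hu
      rw [E.hnbhd y'] at this
      rcases this with h1 | h1 | h1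
      · exact ⟨E.x1 y', h1.symm⟩
      · exact ⟨E.x2 y', h1.symm⟩
      · rw [← hyval] at h1; exact absurd h1 hne
  have := E.h6
  omega

end Setup

end SFAux
namespace SFAux

open SimpleGraph Set

variable {X : Type} {T : PhyloTree X}

lemma no_triangle {a b c : T.V} (h1 : T.G.Adj a b) (h2 : T.G.Adj b c)
    (h3 : T.G.Adj a c) : False := by
  have hu := SimpleGraph.isAcyclic_iff_path_unique.mp T.isTree.IsAcyclic
  have hp1 : (SimpleGraph.Walk.cons h3 SimpleGraph.Walk.nil).IsPath := by
    simp [SimpleGraph.Walk.isPath_def, h3.ne]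
  have hp2 : (SimpleGraph.Walk.cons h1 (SimpleGraph.Walk.cons h2
      SimpleGraph.Walk.nil)).IsPath := by
    simp [SimpleGraph.Walk.isPath_def, h1.ne, h2.ne, h3.ne]
  have := hu ⟨_, hp1⟩ ⟨_, hp2⟩
  have hw : (SimpleGraph.Walk.cons h3 SimpleGraph.Walk.nil : T.G.Walk a c)
      = SimpleGraph.Walk.cons h1 (SimpleGraph.Walk.cons h2 SimpleGraph.Walk.nil) :=
    congrArg Subtype.val this
  have hlen := congrArg SimpleGraph.Walk.length hw
  simp at hlen

lemma no_square {w u1 u2 o : T.V} (h1 : T.G.Adj w u1) (h2 : T.G.Adj w u2)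
    (h3 : T.G.Adj u1 o) (h4 : T.G.Adj u2 o) (hu : u1 ≠ u2) (hwo : w ≠ o) :
    False := by
  have hu' := SimpleGraph.isAcyclic_iff_path_unique.mp T.isTree.IsAcyclic
  have hp1 : (SimpleGraph.Walk.cons h1.symm (SimpleGraph.Walk.cons h2
      SimpleGraph.Walk.nil)).IsPath := by
    simp [SimpleGraph.Walk.isPath_def, h1.ne', h2.ne, hu]
  have hp2 : (SimpleGraph.Walk.cons h3 (SimpleGraph.Walk.cons h4.symm
      SimpleGraph.Walk.nil)).IsPath := by
    simp [SimpleGraph.Walk.isPath_def, h3.ne, h4.ne', hu]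
  have heq := hu' ⟨_, hp1⟩ ⟨_, hp2⟩
  have hw2 : (SimpleGraph.Walk.cons h1.symm (SimpleGraph.Walk.cons h2
        SimpleGraph.Walk.nil) : T.G.Walk u1 u2)
      = SimpleGraph.Walk.cons h3 (SimpleGraph.Walk.cons h4.symm SimpleGraph.Walk.nil) :=
    congrArg Subtype.val heq
  have hs := congrArg SimpleGraph.Walk.support hw2
  simp [SimpleGraph.Walk.support_cons] at hs
  exact hwo hs

/-- If a good vertex has only good neighbours, the tree contains a snowflake. -/
lemma snowflake_of_good_nbrs (hbin : T.IsBinary) {w : T.V} (hw : Good T w)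
    (hall : ∀ u, T.G.Adj w u → Good T u) : HasSnowflake T := by
  classical
  haveI := T.vfin
  have h3 : (T.G.neighborSet w).ncard = 3 := hbin w hw.1
  rw [Set.ncard_eq_three] at h3
  obtain ⟨a, b, c, hab, hac, hbc, hset⟩ := h3
  set u : Fin 3 → T.V := ![a, b, c] with hu
  have hadj : ∀ i, T.G.Adj w (u i) := by
    intro i
    have : u i ∈ T.G.neighborSet w := by
      rw [hset]; fin_cases i <;> simp [hu]
    exact this
  have huinj : Function.Injective u := by
    intro i i' h
    fin_cases i <;> fin_cases i' <;> simp_all [hu] <;> first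
      | rfl
      | exact absurd h hab | exact absurd h hac | exact absurd h hbc
      | exact absurd h.symm hab | exact absurd h.symm hac | exact absurd h.symm hbc
  have hogood : ∀ i, Good T (u i) := fun i => hall _ (hadj i)
  have hoex : ∀ i : Fin 3, ∃ o : Fin 2 → T.V, (o 0 ≠ o 1) ∧
      ∀ j, T.G.Adj (u i) (o j) ∧ o j ≠ w := by
    intro i
    have hcard : (T.G.neighborSet (u i) \ {w}).ncard = 2 := by
      have hmw : w ∈ T.G.neighborSet (u i) := (hadj i).symm
      rw [Set.ncard_diff_singleton_of_mem hmw, hbin _ (hogood i).1]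
    rw [Set.ncard_eq_two] at hcard
    obtain ⟨p, q, hpq, hset'⟩ := hcard
    refine ⟨![p, q], by simpa using hpq, ?_⟩
    intro j
    have : (![p, q] : Fin 2 → T.V) j ∈ T.G.neighborSet (u i) \ {w} := by
      rw [hset']; fin_cases j <;> simp
    exact ⟨this.1, this.2⟩
  choose o ho01 hoadj using hoex
  have hone : ∀ i j, o i j ≠ w := fun i j => (hoadj i j).2
  have honeu : ∀ i j i', o i j ≠ u i' := by
    intro i j i' h
    by_cases hii : i = i'
    · subst hii
      exact (hoadj i j).1.ne (h ▸ rfl)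
    · exact no_triangle (hadj i) ((h ▸ (hoadj i j).1).symm).symm (hadj i')
  have hoo : ∀ i j i' j', i ≠ i' → o i j ≠ o i' j' := by
    intro i j i' j' hii h
    exact no_square (hadj i) (hadj i') (hoadj i j).1 (h ▸ (hoadj i' j').1)
      (fun hh => hii (huinj hh)) (Ne.symm (hone i j)) 
  have hoj : ∀ i j j', j ≠ j' → o i j ≠ o i j' := by
    intro i j j' hjj
    fin_cases j <;> fin_cases j' <;> first
      | exact absurd rfl hjj
      | exact ho01 i
      | exact (ho01 i).symm
  refine ⟨fun p => Option.rec w (fun q => Prod.rec (fun i jj =>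
      Option.rec (u i) (fun j => o i j) jj) q) p, ?_, ?_, ?_, ?_⟩
  · rintro (_ | ⟨i, _ | j⟩) (_ | ⟨i', _ | j'⟩) h <;>
      simp only [] at h
    · rfl
    · exact absurd h.symm ((hadj i').ne')
    · exact absurd h.symm (hone i' j')
    · exact absurd h ((hadj i).ne')
    · rw [huinj h]
    · exact absurd h.symm (honeu i' j' i)
    · exact absurd h (hone i j)
    · exact absurd h (honeu i j i')
    · by_cases hii : i = i'
      · subst hii
        by_cases hjj : j = j'
        · rw [hjj]
        · exact absurd h (hoj i j j' hjj)
      · exact absurd h (hoo i j i' j' hii)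
  · rintro (_ | ⟨i, _ | j⟩)
    · exact hw.1
    · exact (hogood i).1
    · exact good_nbr_internal T (hogood i) (hoadj i j).1
  · intro i
    exact hadj i
  · intro i j
    exact (hoadj i j).1

end SFAux
namespace SFAux

open SimpleGraph Set

attribute [local instance] Classical.propDecidable

variable {X : Type} {T : PhyloTree X}

namespace Setup

variable (E : Setup T)

/-- Vertex predicate for the contracted tree. -/
def SVp (w : T.V) : Prop := Good T w ∨ ∃ y : CVtx T, w = T.φ (E.x1 y)

/-- Vertices of the contracted tree. -/
def SV := {w : T.V // E.SVp w}

lemma cherry_not_SVp (y : CVtx T) : ¬ E.SVp y.val := by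
  rintro (hg | ⟨y', hy'⟩)
  · exact hg.2 y.2.2
  · exact y.2.1 (hy' ▸ ⟨E.x1 y', rfl⟩)

lemma x2_not_SVp (y : CVtx T) : ¬ E.SVp (T.φ (E.x2 y)) := by
  rintro (hg | ⟨y', hy'⟩)
  · exact hg.1 ⟨E.x2 y, rfl⟩
  · have hx : E.x2 y = E.x1 y' := T.φinj hy'
    have : y = y' := by
      rw [← E.cherryOf_x2 y, hx, E.cherryOf_x1]
    cases this
    exact E.hx12 y hx.symm

/-- Adjacency of the contracted tree. -/
def SAdj (a b : E.SV) : Prop :=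
  (Good T a.1 ∧ Good T b.1 ∧ T.G.Adj a.1 b.1) ∨
  (∃ y : CVtx T, a.1 = T.φ (E.x1 y) ∧ b.1 = E.st y) ∨
  (∃ y : CVtx T, b.1 = T.φ (E.x1 y) ∧ a.1 = E.st y)

/-- The contracted graph. -/
def SG : SimpleGraph E.SV where
  Adj := E.SAdj
  symm := by
    constructor
    rintro a b (⟨h1, h2, h3⟩ | ⟨y, h1, h2⟩ | ⟨y, h1, h2⟩)
    · exact Or.inl ⟨h2, h1, h3.symm⟩
    · exact Or.inr (Or.inr ⟨y, h1, h2⟩)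
    · exact Or.inr (Or.inl ⟨y, h1, h2⟩)
  loopless := by
    constructor
    rintro a (⟨h1, h2, h3⟩ | ⟨y, h1, h2⟩ | ⟨y, h1, h2⟩)
    · exact T.G.loopless.irrefl _ h3
    · exact E.hstint y ⟨E.x1 y, h1.symm.trans h2⟩
    · exact E.hstint y ⟨E.x1 y, h1.symm.trans h2⟩

/-- The leaf of `S` corresponding to a cherry. -/
def Sφ (y : CVtx T) : E.SV := ⟨T.φ (E.x1 y), Or.inr ⟨y, rfl⟩⟩

/-- The stem of a cherry as a vertex of `S`. -/
def stS (y : CVtx T) : E.SV := ⟨E.st y, Or.inl (E.st_good y)⟩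

lemma sadj_good_good {a b : E.SV} (ha : Good T a.1) (hb : Good T b.1) :
    E.SG.Adj a b ↔ T.G.Adj a.1 b.1 := by
  constructor
  · rintro (⟨h1, h2, h3⟩ | ⟨y, h1, h2⟩ | ⟨y, h1, h2⟩)
    · exact h3
    · exact absurd ⟨E.x1 y, h1.symm⟩ ha.1
    · exact absurd ⟨E.x1 y, h1.symm⟩ hb.1
  · intro h
    exact Or.inl ⟨ha, hb, h⟩

lemma x1_eq_of_phi {y y' : CVtx T} (h : T.φ (E.x1 y) = T.φ (E.x1 y')) : y = y' := by
  have := T.φinj h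
  rw [← E.cherryOf_x1 y, this, E.cherryOf_x1]

lemma sadj_leaf {y : CVtx T} {b : E.SV} : E.SG.Adj (E.Sφ y) b ↔ b.1 = E.st y := by
  constructor
  · rintro (⟨h1, h2, h3⟩ | ⟨y', h1, h2⟩ | ⟨y', h1, h2⟩)
    · exact absurd ⟨E.x1 y, rfl⟩ h1.1
    · have : y = y' := E.x1_eq_of_phi h1
      exact this ▸ h2
    · exact absurd ⟨E.x1 y, h2⟩ (E.hstint y')
  · intro h
    exact Or.inr (Or.inl ⟨y, rfl, h⟩)

lemma snbhd_leaf (y : CVtx T) : E.SG.neighborSet (E.Sφ y) = {E.stS y} := by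
  ext b
  rw [SimpleGraph.mem_neighborSet, E.sadj_leaf, Set.mem_singleton_iff]
  exact ⟨fun h => Subtype.ext h, fun h => h ▸ rfl⟩

/-- The contraction map on vertices. -/
noncomputable def F (u : T.V) : T.V :=
  if hu : CherryV T u then T.φ (E.x1 ⟨u, hu⟩) else u

lemma F_cherry {u : T.V} (hu : CherryV T u) : E.F u = T.φ (E.x1 ⟨u, hu⟩) := dif_pos hu

lemma F_not_cherry {u : T.V} (hu : ¬ CherryV T u) : E.F u = u := dif_neg hu

lemma snbhd_good {w : T.V} (hw : Good T w) (h : E.SVp w) :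
    Subtype.val '' E.SG.neighborSet ⟨w, h⟩ = E.F '' T.G.neighborSet w := by
  ext u
  constructor
  · rintro ⟨b, hb, rfl⟩
    rcases hb with ⟨h1, h2, h3⟩ | ⟨y, h1, h2⟩ | ⟨y, h1, h2⟩
    · exact ⟨b.1, h3, E.F_not_cherry (not_cherry_of_good T h2)⟩
    · exact absurd ⟨E.x1 y, h1.symm⟩ hw.1
    · refine ⟨y.val, ?_, ?_⟩
      · have := (E.st_adj y).symm
        rwa [← h2] at this
      · rw [E.F_cherry y.2, h1]
        rfl
  · rintro ⟨u', hu', rfl⟩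
    have hint : u' ∉ Set.range T.φ := good_nbr_internal T hw hu'
    rcases internal_cases T hint with hg | hcv
    · refine ⟨⟨u', Or.inl hg⟩, Or.inl ⟨hw, hg, hu'⟩, (E.F_not_cherry (not_cherry_of_good T hg)).symm⟩
    · set y : CVtx T := ⟨u', hcv⟩ with hy
      have hws : w = E.st y := E.internal_adj_eq_st (SimpleGraph.Adj.symm hu') hw.1
      refine ⟨E.Sφ y, Or.inr (Or.inr ⟨y, rfl, hws⟩), (E.F_cherry hcv).symm⟩

lemma F_injOn_nbhd {w : T.V} (hw : Good T w) :
    Set.InjOn E.F (T.G.neighborSet w) := by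
  intro u hu u' hu' h
  have hiu : u ∉ Set.range T.φ := good_nbr_internal T hw hu
  have hiu' : u' ∉ Set.range T.φ := good_nbr_internal T hw hu'
  by_cases hcu : CherryV T u <;> by_cases hcu' : CherryV T u'
  · rw [E.F_cherry hcu, E.F_cherry hcu'] at h
    have := E.x1_eq_of_phi h
    exact congrArg Subtype.val this
  · rw [E.F_cherry hcu, E.F_not_cherry hcu'] at h
    exact absurd ⟨E.x1 _, h⟩ hiu'
  · rw [E.F_not_cherry hcu, E.F_cherry hcu'] at h
    exact absurd ⟨E.x1 _, h.symm⟩ hiu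
  · rw [E.F_not_cherry hcu, E.F_not_cherry hcu'] at h
    exact h

lemma snbhd_good_ncard {w : T.V} (hw : Good T w) (h : E.SVp w) :
    (E.SG.neighborSet ⟨w, h⟩).ncard = 3 := by
  haveI := T.vfin
  have h1 : (Subtype.val '' E.SG.neighborSet ⟨w, h⟩).ncard
      = (E.SG.neighborSet ⟨w, h⟩).ncard :=
    Set.ncard_image_of_injective _ Subtype.val_injective
  rw [← h1, E.snbhd_good hw h, Set.ncard_image_of_injOn (E.F_injOn_nbhd hw),
    E.hbin w hw.1]

end Setup

end SFAux
namespace SFAux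

open SimpleGraph Set

attribute [local instance] Classical.propDecidable

variable {X : Type} {T : PhyloTree X}

namespace Setup

variable (E : Setup T)

lemma good_not_cherryval {u : T.V} (hg : Good T u) (y : CVtx T) : u ≠ y.val :=
  fun h => (not_cherry_of_good T hg) (h ▸ y.2)

lemma reach_aux : ∀ (a b : T.V) (p : T.G.Walk a b), p.IsPath →
    (ha : Good T a) → (hb : Good T b) →
    E.SG.Reachable ⟨a, Or.inl ha⟩ ⟨b, Or.inl hb⟩ := by
  intro a b p
  induction p with
  | nil =>
    intro _ ha hb
    rfl
  | cons h q ih =>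
    rename_i a c b
    intro hp ha hb
    rw [SimpleGraph.Walk.cons_isPath_iff] at hp
    have hcint : c ∉ Set.range T.φ := good_nbr_internal T ha h
    rcases internal_cases T hcint with hcg | hcv
    · have hadj : E.SG.Adj ⟨a, Or.inl ha⟩ ⟨c, Or.inl hcg⟩ :=
        Or.inl ⟨ha, hcg, h⟩
      exact hadj.reachable.trans (ih hp.1 hcg hb)
    · exfalso
      set y : CVtx T := ⟨c, hcv⟩ with hy
      have hast : a = E.st y := E.internal_adj_eq_st h.symm ha.1
      cases q with
      | nil =>
        exact (not_cherry_of_good T hb) hcv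
      | cons h2 q2 =>
        rename_i d
        have hd : d ∈ T.G.neighborSet y.val := h2
        rw [E.hnbhd y] at hd
        rw [SimpleGraph.Walk.cons_isPath_iff] at hp
        rcases hd with hd | hd | hd
        on_goal 3 =>
          -- d = st y = a, but a ∉ support
          apply hp.2
          have hd' : d = E.st y := hd
          rw [hast, ← hd']
          rw [SimpleGraph.Walk.support_cons]
          exact List.mem_cons_of_mem _ (SimpleGraph.Walk.start_mem_support q2)
        all_goals {
          subst hd
          cases q2 with
          | nil => exact hb.1 ⟨_, rfl⟩
          | cons h3 q3 =>
            rename_i e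
            have he : e = nbr T _ := eq_nbr T h3
            have hce : c = nbr T _ := eq_nbr T h2.symm
            rw [SimpleGraph.Walk.cons_isPath_iff] at hp
            apply hp.1.2
            rw [hce, ← he]
            rw [SimpleGraph.Walk.support_cons]
            exact List.mem_cons_of_mem _ (SimpleGraph.Walk.start_mem_support q3)
        }

lemma sadj_to_stem (y : CVtx T) : E.SG.Adj (E.Sφ y) (E.stS y) :=
  Or.inr (Or.inl ⟨y, rfl, rfl⟩)

lemma reach_to_good (v : E.SV) : ∃ w : T.V, ∃ hw : Good T w,
    E.SG.Reachable v ⟨w, Or.inl hw⟩ := by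
  rcases v.2 with hg | ⟨y, hy⟩
  · refine ⟨v.1, hg, ?_⟩
    have hvv : (⟨v.1, Or.inl hg⟩ : E.SV) = v := Subtype.ext rfl
    rw [hvv]
  · have hv : v = E.Sφ y := Subtype.ext hy
    exact ⟨E.st y, E.st_good y, (hv ▸ (E.sadj_to_stem y)).reachable⟩

lemma spreconnected : E.SG.Preconnected := by
  intro a b
  obtain ⟨wa, hwa, ra⟩ := E.reach_to_good a
  obtain ⟨wb, hwb, rb⟩ := E.reach_to_good b
  obtain ⟨p, hp⟩ := exists_path T wa wb
  exact (ra.trans (E.reach_aux wa wb p hp hwa hwb)).trans rb.symm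

lemma snonempty : Nonempty E.SV := by
  have hpos : 0 < Nat.card X := by have := E.h5; omega
  have : Nonempty X := (Nat.card_pos_iff.mp hpos).1
  obtain ⟨x⟩ := this
  exact ⟨E.Sφ (E.cherryOf x)⟩

lemma sacyclic : E.SG.IsAcyclic := by
  intro v c hc
  -- every support vertex is good
  have hsup : ∀ u, u ∈ c.support → Good T u.1 := by
    intro u hu
    rcases u.2 with hg | ⟨y, hy⟩
    · exact hg
    exfalso
    have huy : u = E.Sφ y := Subtype.ext hy
    subst huy
    obtain ⟨q, hq⟩ : ∃ q : E.SG.Walk (E.Sφ y) (E.Sφ y), q.IsCycle :=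
      ⟨c.rotate _ hu, hc.rotate hu⟩
    clear hc hu c
    cases q with
    | nil => exact hq.ne_nil rfl
    | cons h q =>
      rename_i d
      have hlen := hq.three_le_length
      rw [SimpleGraph.Walk.cons_isCycle_iff] at hq
      have hd : d = E.stS y := Subtype.ext (E.sadj_leaf.mp h)
      subst hd
      -- q : Walk (stS y) (Sφ y), a path; its reverse starts at Sφ y
      have hrev : q.reverse.IsPath := hq.1.reverse
      have key : ∀ (s t : E.SV) (r : E.SG.Walk s t), r.IsPath →
          s = E.Sφ y → t = E.stS y → r.length = 1 := by
        intro s t r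
        cases r with
        | nil =>
          intro _ hs ht
          exfalso
          rw [hs] at ht
          have : T.φ (E.x1 y) = E.st y := congrArg Subtype.val ht
          exact E.hstint y ⟨E.x1 y, this⟩
        | cons h2 r2 =>
          rename_i d2
          intro hr hs ht
          subst hs
          subst ht
          have hd2 : d2 = E.stS y := Subtype.ext (E.sadj_leaf.mp h2)
          subst hd2
          rw [SimpleGraph.Walk.cons_isPath_iff] at hr
          have : r2 = SimpleGraph.Walk.nil :=
            (SimpleGraph.Walk.isPath_iff_eq_nil (p := r2)).mp hr.1
          subst this
          rfl
      have hq1 : q.reverse.length = 1 := key _ _ q.reverse hrev rfl rfl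
      rw [SimpleGraph.Walk.length_reverse] at hq1
      rw [SimpleGraph.Walk.length_cons, hq1] at hlen
      omega
  -- transfer the cycle into T
  have hedges : ∀ e ∈ c.edges, e ∈ (T.G.comap (fun v : E.SV => v.1)).edgeSet := by
    intro e he
    induction e using Sym2.ind with
    | _ a b =>
      have hadj : E.SG.Adj a b := c.adj_of_mem_edges he
      have ha := hsup a (SimpleGraph.Walk.fst_mem_support_of_mem_edges c he)
      have hb := hsup b (SimpleGraph.Walk.snd_mem_support_of_mem_edges c he)
      exact (E.sadj_good_good ha hb).mp hadj
  have hct : ((c.transfer _ hedges).map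
      (SimpleGraph.Embedding.comap (⟨fun v : E.SV => v.1, Subtype.val_injective⟩ :
        E.SV ↪ T.V) T.G).toHom).IsCycle := by
    apply (SimpleGraph.Walk.map_isCycle_iff_of_injective ?_).mpr (hc.transfer hedges)
    exact (SimpleGraph.Embedding.comap (⟨fun v : E.SV => v.1, Subtype.val_injective⟩ :
        E.SV ↪ T.V) T.G).injective
  exact T.isTree.IsAcyclic _ hct

lemma streeG : (E.SG).IsTree := by
  haveI := E.snonempty
  exact ⟨⟨E.spreconnected⟩, E.sacyclic⟩

end Setup

end SFAux
namespace SFAux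

open SimpleGraph Set

attribute [local instance] Classical.propDecidable

variable {X : Type} {T : PhyloTree X}

namespace Setup

variable (E : Setup T)

/-- The contracted phylogenetic tree. -/
noncomputable def Stree : PhyloTree (CVtx T) where
  V := E.SV
  vfin := by haveI := T.vfin; exact Subtype.finite
  G := E.SG
  isTree := E.streeG
  φ := E.Sφ
  φinj := fun y y' h => E.x1_eq_of_phi (congrArg Subtype.val h)
  leaf_iff := by
    intro v
    rcases hv2 : v.2 with hg | ⟨y, hy⟩
    · have h3 : (E.SG.neighborSet v).ncard = 3 := by
        have := E.snbhd_good_ncard hg v.2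
        convert this using 3
        rfl
      rw [h3]
      constructor
      · intro h; omega
      · rintro ⟨y, rfl⟩
        exact absurd ⟨E.x1 y, rfl⟩ hg.1
    · have hv : v = E.Sφ y := Subtype.ext hy
      subst hv
      rw [E.snbhd_leaf y, Set.ncard_singleton]
      simp only [true_iff]
      exact ⟨y, rfl⟩
  not_two := by
    intro v
    rcases hv2 : v.2 with hg | ⟨y, hy⟩
    · have h3 : (E.SG.neighborSet v).ncard = 3 := by
        have := E.snbhd_good_ncard hg v.2
        convert this using 3
        rfl
      omega
    · have hv : v = E.Sφ y := Subtype.ext hy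
      subst hv
      rw [E.snbhd_leaf y, Set.ncard_singleton]
      omega

lemma sinternal_iff {v : E.SV} : (v ∉ Set.range E.Sφ) ↔ Good T v.1 := by
  constructor
  · intro hv
    rcases v.2 with hg | ⟨y, hy⟩
    · exact hg
    · exact absurd ⟨y, (Subtype.ext hy.symm : E.Sφ y = v)⟩ hv
  · rintro hg ⟨y, hy⟩
    exact hg.1 ⟨E.x1 y, congrArg Subtype.val hy⟩

lemma sbinary : (E.Stree).IsBinary := by
  intro v hv
  have hg : Good T v.1 := (E.sinternal_iff).mp hv
  exact E.snbhd_good_ncard hg v.2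

lemma scaterpillar (hns : ¬ HasSnowflake T) : (E.Stree).IsCaterpillar := by
  intro v hv
  have hg : Good T v.1 := (E.sinternal_iff).mp hv
  have hex : ∃ u, T.G.Adj v.1 u ∧ ¬ Good T u := by
    by_contra hcon
    push_neg at hcon
    exact hns (snowflake_of_good_nbrs E.hbin hg fun u hu => hcon u hu)
  obtain ⟨u, hu, hng⟩ := hex
  have hint : u ∉ Set.range T.φ := good_nbr_internal T hg hu
  have hcv : CherryV T u := (internal_cases T hint).resolve_left hng
  set y : CVtx T := ⟨u, hcv⟩
  have hst : v.1 = E.st y := E.internal_adj_eq_st hu.symm hg.1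
  exact ⟨E.Sφ y, Or.inr (Or.inr ⟨y, rfl, hst⟩), ⟨y, rfl⟩⟩

lemma adj_x2_eq {y : CVtx T} {v : T.V} (h : T.G.Adj v (T.φ (E.x2 y))) :
    v = y.val := by
  have h1 : v = nbr T (E.x2 y) := eq_nbr T h.symm
  have h2 : (E.cherryOf (E.x2 y)).val = nbr T (E.x2 y) := rfl
  rw [h1, ← h2, E.cherryOf_x2]

lemma screpl : IsCherryReplacement E.Stree T := by
  refine ⟨fun a => a.1, fun y => y.1, fun y => T.φ (E.x2 y), E.x1, E.x2,
    Subtype.val_injective, Subtype.val_injective, ?_, ?_, ?_, ?_, ?_,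
    fun y => rfl, fun y => rfl, ?_, ?_, ?_, ?_, ?_, ?_⟩
  · -- ζ injective
    intro y y' h
    have hx : E.x2 y = E.x2 y' := T.φinj h
    rw [← E.cherryOf_x2 y, hx, E.cherryOf_x2]
  · -- ψ a ≠ σ y
    intro a y h
    have h' : a.1 = y.1 := h
    exact E.cherry_not_SVp y (h' ▸ a.2)
  · -- ψ a ≠ ζ y
    intro a y h
    have h' : a.1 = T.φ (E.x2 y) := h
    exact E.x2_not_SVp y (h' ▸ a.2)
  · -- σ y ≠ ζ y'
    intro y y' h
    have h' : y.1 = T.φ (E.x2 y') := h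
    exact y.2.1 ⟨E.x2 y', h'.symm⟩
  · -- cover
    intro v
    by_cases hint : v ∈ Set.range T.φ
    · obtain ⟨x, rfl⟩ := hint
      rcases E.x_cases x with hx | hx
      · refine Or.inl ⟨E.Sφ (E.cherryOf x), ?_⟩
        show T.φ (E.x1 (E.cherryOf x)) = T.φ x
        rw [← hx]
      · refine Or.inr (Or.inr ⟨E.cherryOf x, ?_⟩)
        show T.φ (E.x2 (E.cherryOf x)) = T.φ x
        rw [← hx]
    · rcases internal_cases T hint with hg | hcv
      · exact Or.inl ⟨⟨v, Or.inl hg⟩, rfl⟩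
      · exact Or.inr (Or.inl ⟨⟨v, hcv⟩, rfl⟩)
  · -- ∀ x, x = g y ∨ x = h y
    intro x
    rcases E.x_cases x with hx | hx
    · exact Or.inl ⟨E.cherryOf x, hx⟩
    · exact Or.inr ⟨E.cherryOf x, hx⟩
  · -- ψ-ψ adjacency
    intro a b
    constructor
    · intro h
      have hga : Good T a.1 := by
        rcases a.2 with hg | ⟨y, hy⟩
        · exact hg
        · exfalso
          have : b.1 = nbr T (E.x1 y) := eq_nbr T (hy ▸ h)
          have h2 : (E.cherryOf (E.x1 y)).val = nbr T (E.x1 y) := rfl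
          rw [← h2, E.cherryOf_x1] at this
          exact E.cherry_not_SVp y (this ▸ b.2)
      have hgb : Good T b.1 := by
        rcases b.2 with hg | ⟨y, hy⟩
        · exact hg
        · exfalso
          have : a.1 = nbr T (E.x1 y) := eq_nbr T (hy ▸ h.symm)
          have h2 : (E.cherryOf (E.x1 y)).val = nbr T (E.x1 y) := rfl
          rw [← h2, E.cherryOf_x1] at this
          exact E.cherry_not_SVp y (this ▸ a.2)
      refine ⟨Or.inl ⟨hga, hgb, h⟩, ?_, ?_⟩
      · exact (E.sinternal_iff).mpr hga
      · exact (E.sinternal_iff).mpr hgb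
    · rintro ⟨hS, hna, hnb⟩
      rcases hS with ⟨h1, h2, h3⟩ | ⟨y, h1, h2⟩ | ⟨y, h1, h2⟩
      · exact h3
      · exact absurd ⟨y, Subtype.ext h1.symm⟩ hna
      · exact absurd ⟨y, Subtype.ext h1.symm⟩ hnb
  · -- ψ-σ adjacency
    intro a y
    constructor
    · intro h
      have hmem : a.1 ∈ T.G.neighborSet y.val := h.symm
      rw [E.hnbhd y] at hmem
      rcases hmem with h1 | h1 | h1
      · exact Or.inl (Subtype.ext h1)
      · exact absurd (h1 ▸ a.2) (E.x2_not_SVp y)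
      · exact Or.inr (E.sadj_leaf.mpr h1)
    · rintro (h | h)
      · subst h
        exact (E.hadj1 y)
      · have h1 : a.1 = E.st y := E.sadj_leaf.mp h
        have h2 : T.G.Adj (E.st y) y.val := (E.st_adj y).symm
        rw [← h1] at h2
        exact h2
  · -- no ψ-ζ adjacency
    intro a y h
    have := E.adj_x2_eq h
    exact E.cherry_not_SVp y (this ▸ a.2)
  · -- no σ-σ adjacency
    intro y y' h
    have hmem : y'.val ∈ T.G.neighborSet y.val := h
    rw [E.hnbhd y] at hmem
    rcases hmem with h1 | h1 | h1
    · exact y'.2.1 ⟨E.x1 y, h1.symm⟩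
    · exact y'.2.1 ⟨E.x2 y, h1.symm⟩
    · exact (E.st_good y).2 (h1 ▸ y'.2.2)
  · -- σ-ζ adjacency
    intro y y'
    constructor
    · intro h
      have h' : T.G.Adj y.1 (T.φ (E.x2 y')) := h
      exact Subtype.ext (E.adj_x2_eq (y := y') h')
    · rintro rfl
      exact (E.hadj2 y).symm

end Setup

lemma cherry_data (hbin : T.IsBinary) (h4 : 4 ≤ Nat.card X)
    (hc : ∀ x : X, ∃ y, T.IsCherry x y) (y : CVtx T) :
    ∃ (x1 x2 : X) (w : T.V), x1 ≠ x2 ∧ T.G.Adj (T.φ x1) y.val ∧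
      T.G.Adj (T.φ x2) y.val ∧ w ∉ Set.range T.φ ∧
      T.G.neighborSet y.val = {T.φ x1, T.φ x2, w} := by
  haveI := T.vfin
  obtain ⟨x, hx⟩ := y.2.2
  obtain ⟨x', hxx', v, hxv, hx'v⟩ := hc x
  have hv : v = nbr T x := eq_nbr T hxv
  have hy : y.val = nbr T x := eq_nbr T hx
  have hx' : T.G.Adj (T.φ x') y.val := by rw [hy, ← hv]; exact hx'v
  have hne : T.φ x ≠ T.φ x' := fun h => hxx' (T.φinj h)
  have hsub : {T.φ x, T.φ x'} ⊆ T.G.neighborSet y.val := by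
    rintro u (rfl | rfl)
    · exact hx.symm
    · exact hx'.symm
  have hd : (T.G.neighborSet y.val \ {T.φ x, T.φ x'}).ncard = 1 := by
    rw [Set.ncard_diff hsub (Set.toFinite _), hbin y.val y.2.1,
      Set.ncard_pair hne]
  rw [Set.ncard_eq_one] at hd
  obtain ⟨w, hw⟩ := hd
  have hset : T.G.neighborSet y.val = {T.φ x, T.φ x', w} := by
    have := Set.union_diff_cancel hsub
    rw [hw, Set.union_singleton] at this
    rw [← this]
    ext u
    simp only [Set.mem_insert_iff, Set.mem_singleton_iff]
    tauto
  have hwint : w ∉ Set.range T.φ := by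
    rintro ⟨z, rfl⟩
    have hall : ∀ u, T.G.Adj y.val u → u ∈ Set.range T.φ := by
      intro u hu
      have : u ∈ T.G.neighborSet y.val := hu
      rw [hset] at this
      rcases this with h1 | h1 | h1
      · exact ⟨x, h1.symm⟩
      · exact ⟨x', h1.symm⟩
      · exact ⟨z, h1.symm⟩
    have hsmall := small_tree T hbin y.2.1 hall
    omega
  exact ⟨x, x', w, hxx', hx, hx', hwint, hset⟩

end SFAux
/-- a snowflake-free binary phylogenetic tree with at least four leaves
is a cherried caterpillar or has a leaf not in a cherry. -/
theorem snowflake_free_structure {X : Type} (T : PhyloTree X)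
    (hbin : T.IsBinary) (hX : 4 ≤ Nat.card X) (hsnow : ¬ HasSnowflake T) :
    IsCherriedCaterpillar T ∨ ∃ x : X, ¬ ∃ y : X, T.IsCherry x y := by
  classical
  by_cases hc : ∀ x : X, ∃ y, T.IsCherry x y
  · by_cases h4 : Nat.card X = 4
    · exact Or.inl (Or.inl ⟨hbin, h4⟩)
    · have h5 : 5 ≤ Nat.card X := by omega
      choose x1f x2f stf h1 h2 h3 h4' h5' using SFAux.cherry_data hbin hX hc
      set E : SFAux.Setup T := ⟨hbin, hc, h5, x1f, x2f, stf, h1, h2, h3, h4', h5'⟩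
      exact Or.inl (Or.inr ⟨SFAux.CVtx T, E.Stree, E.sbinary,
        E.scaterpillar hsnow, E.hY3, E.screpl⟩)
  · simp only [not_forall] at hc
    exact Or.inr hc
end
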